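/- arXiv:0803.0049 — 9 statements merged into one kernel-verified Lean document; each statement's English description precedes it below -/
import Mathlib

section
/- If Ω = A ∪ B ∪ C is a disjoint union of three intervals with |A|+|B|+|C| = 1, and Ω tiles ℝ by a translation set T such that in the tiling two translates of A appear adjacent (the right endpoint of one copy of A coincides with the left endpoint of another copy of A), then either |A| = 1/2 or |A| = |B| = |C| = 1/3. -/
open MeasureTheory

private lemma keyL (Ω T : Set ℝ)
    (htile : ∀ᵐ x : ℝ ∂volume, ∃! t, t ∈ T ∧ x - t ∈ Ω) :
    ∀ u v : ℝ, u < v → ∃ x, u < x ∧ x < v ∧ ∃! t, t ∈ T ∧ x - t ∈ Ω := by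
  intro u v huv
  by_contra h
  have hsub : Set.Ioo u v ⊆ {x : ℝ | ¬ ∃! t, t ∈ T ∧ x - t ∈ Ω} := by
    intro x hx hP
    exact h ⟨x, hx.1, hx.2, hP⟩
  have h0 : volume (Set.Ioo u v) = 0 :=
    measure_mono_null hsub (ae_iff.mp htile)
  rw [Real.volume_Ioo] at h0
  have := ENNReal.ofReal_eq_zero.mp h0
  linarith

private lemma nodL (Ω T : Set ℝ)
    (htile : ∀ᵐ x : ℝ ∂volume, ∃! t, t ∈ T ∧ x - t ∈ Ω)
    {t t' : ℝ} (ht : t ∈ T) (ht' : t' ∈ T) (hne : t ≠ t') {u v : ℝ} (huv : u < v)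
    (h1 : ∀ x, u < x → x < v → x - t ∈ Ω) (h2 : ∀ x, u < x → x < v → x - t' ∈ Ω) :
    False := by
  obtain ⟨x, hx1, hx2, tt, htt, huniq⟩ := keyL Ω T htile u v huv
  exact hne ((huniq t ⟨ht, h1 x hx1 hx2⟩).trans (huniq t' ⟨ht', h2 x hx1 hx2⟩).symm)

private lemma core (a₁ a₂ a₃ α β γ s : ℝ) (T : Set ℝ)
    (hα : 0 < α) (hβ : 0 < β) (hγ : 0 < γ)
    (hd1 : Disjoint (Set.Ico a₁ (a₁ + α)) (Set.Ico a₂ (a₂ + β)))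
    (hd3 : Disjoint (Set.Ico a₂ (a₂ + β)) (Set.Ico a₃ (a₃ + γ)))
    (htile : ∀ᵐ x : ℝ ∂volume, ∃! t, t ∈ T ∧ x - t ∈
      (Set.Ico a₁ (a₁ + α) ∪ Set.Ico a₂ (a₂ + β) ∪ Set.Ico a₃ (a₃ + γ)))
    (hs : s ∈ T) (hs' : s + α ∈ T) (hβα : β < α) :
    γ = α - β := by
  set Ω : Set ℝ := Set.Ico a₁ (a₁ + α) ∪ Set.Ico a₂ (a₂ + β) ∪ Set.Ico a₃ (a₃ + γ) with hΩ
  have mem1 : ∀ t x : ℝ, a₁ + t ≤ x → x < a₁ + α + t → x - t ∈ Ω := by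
    intro t x h1 h2
    rw [hΩ]
    exact Set.mem_union_left _ (Set.mem_union_left _ ⟨by linarith, by linarith⟩)
  have mem2 : ∀ t x : ℝ, a₂ + t ≤ x → x < a₂ + β + t → x - t ∈ Ω := by
    intro t x h1 h2
    rw [hΩ]
    exact Set.mem_union_left _ (Set.mem_union_right _ ⟨by linarith, by linarith⟩)
  have mem3 : ∀ t x : ℝ, a₃ + t ≤ x → x < a₃ + γ + t → x - t ∈ Ω := by
    intro t x h1 h2
    rw [hΩ]
    exact Set.mem_union_right _ ⟨by linarith, by linarith⟩
  have hSep : ∀ t ∈ T, ∀ t' ∈ T, t < t' → t + α ≤ t' := by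
    intro t ht t' ht' hlt
    by_contra h
    push_neg at h
    exact nodL Ω T htile ht ht' (ne_of_lt hlt) (by linarith : a₁ + t' < a₁ + t + α)
      (fun x h1 h2 => mem1 t x (by linarith) (by linarith))
      (fun x h1 h2 => mem1 t' x (by linarith) (by linarith))
  have flankL : ∀ t, t ∈ T → ∀ q l : ℝ,
      (∀ x', q ≤ x' → x' < q + l → x' - t ∈ Ω) →
      (t = s → Disjoint (Set.Ico q (q + l)) (Set.Ico (a₂ + s) (a₂ + s + β))) →
      a₂ + s + β < q + l → a₂ + s + β ≤ q := by
    intro t ht q l hmem hts hlt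
    by_contra hq
    push_neg at hq
    have hq1 : q ≤ max q (a₂ + s) := le_max_left _ _
    have hq2 : a₂ + s ≤ max q (a₂ + s) := le_max_right _ _
    have hu1 : max q (a₂ + s) < a₂ + s + β := max_lt hq (by linarith)
    by_cases hts' : t = s
    · have hdisj := hts hts'
      set z : ℝ := (max q (a₂ + s) + (a₂ + s + β)) / 2 with hz
      have hz1 : z ∈ Set.Ico q (q + l) := ⟨by simp only [hz]; linarith, by simp only [hz]; linarith⟩
      have hz2 : z ∈ Set.Ico (a₂ + s) (a₂ + s + β) := ⟨by simp only [hz]; linarith, by simp only [hz]; linarith⟩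
      exact Set.disjoint_left.mp hdisj hz1 hz2
    · exact nodL Ω T htile ht hs hts' hu1
        (fun x h1 h2 => hmem x (by linarith) (by linarith))
        (fun x h1 h2 => mem2 s x (by linarith) (by linarith))
  have flankR : ∀ t, t ∈ T → ∀ q l : ℝ,
      (∀ x', q ≤ x' → x' < q + l → x' - t ∈ Ω) →
      (t = s + α → Disjoint (Set.Ico q (q + l)) (Set.Ico (a₂ + (s + α)) (a₂ + (s + α) + β))) →
      q < a₂ + s + α → q + l ≤ a₂ + s + α := by
    intro t ht q l hmem hts hlt
    by_contra hq
    push_neg at hq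
    have hv1 : min (q + l) (a₂ + s + α + β) ≤ q + l := min_le_left _ _
    have hv2 : min (q + l) (a₂ + s + α + β) ≤ a₂ + s + α + β := min_le_right _ _
    have hu1 : a₂ + s + α < min (q + l) (a₂ + s + α + β) := lt_min hq (by linarith)
    by_cases hts' : t = s + α
    · have hdisj := hts hts'
      set z : ℝ := (a₂ + s + α + min (q + l) (a₂ + s + α + β)) / 2 with hz
      have hz1 : z ∈ Set.Ico q (q + l) := ⟨by simp only [hz]; linarith, by simp only [hz]; linarith⟩
      have hz2 : z ∈ Set.Ico (a₂ + (s + α)) (a₂ + (s + α) + β) :=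
        ⟨by simp only [hz]; linarith, by simp only [hz]; linarith⟩
      exact Set.disjoint_left.mp hdisj hz1 hz2
    · exact nodL Ω T htile ht hs' hts' hu1
        (fun x h1 h2 => hmem x (by linarith) (by linarith))
        (fun x h1 h2 => mem2 (s + α) x (by linarith) (by linarith))
  -- translated disjointness helpers
  have tr1 : ∀ u : ℝ, Disjoint (Set.Ico (a₁ + u) (a₁ + u + α)) (Set.Ico (a₂ + u) (a₂ + u + β)) := by
    intro u
    rw [Set.disjoint_left]
    intro z hz1 hz2
    exact Set.disjoint_left.mp hd1
      (⟨by linarith [hz1.1, hz1.2], by linarith [hz1.1, hz1.2]⟩ : z - u ∈ Set.Ico a₁ (a₁ + α))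
      ⟨by linarith [hz2.1, hz2.2], by linarith [hz2.1, hz2.2]⟩
  have tr3 : ∀ u : ℝ, Disjoint (Set.Ico (a₃ + u) (a₃ + u + γ)) (Set.Ico (a₂ + u) (a₂ + u + β)) := by
    intro u
    rw [Set.disjoint_left]
    intro z hz1 hz2
    exact Set.disjoint_left.mp hd3.symm
      (⟨by linarith [hz1.1, hz1.2], by linarith [hz1.1, hz1.2]⟩ : z - u ∈ Set.Ico a₃ (a₃ + γ))
      ⟨by linarith [hz2.1, hz2.2], by linarith [hz2.1, hz2.2]⟩
  -- the structure lemma: any tile interval covering a point of the gap G is a C interval inside G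
  have hS : ∀ x t, a₂ + s + β < x → x < a₂ + s + α → t ∈ T → x - t ∈ Ω →
      a₂ + s + β ≤ a₃ + t ∧ a₃ + t ≤ x ∧ x < a₃ + t + γ ∧ a₃ + t + γ ≤ a₂ + s + α := by
    intro x t hx1 hx2 ht hmem
    rw [hΩ] at hmem
    rcases hmem with (hm | hm) | hm
    · exfalso
      have hb1 : a₁ ≤ x - t := hm.1
      have hb2 : x - t < a₁ + α := hm.2
      have hL := flankL t ht (a₁ + t) α
        (fun x' u1 u2 => mem1 t x' (by linarith) (by linarith))
        (fun h => by rw [h]; convert tr1 s using 2 <;> ring) (by linarith)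
      have hR := flankR t ht (a₁ + t) α
        (fun x' u1 u2 => mem1 t x' (by linarith) (by linarith))
        (fun h => by rw [h]; convert tr1 (s + α) using 2 <;> ring) (by linarith)
      linarith
    · exfalso
      have hb1 : a₂ ≤ x - t := hm.1
      have hb2 : x - t < a₂ + β := hm.2
      by_cases hts : t = s
      · subst hts; linarith
      by_cases hts' : t = s + α
      · subst hts'; linarith
      have hL := flankL t ht (a₂ + t) β
        (fun x' u1 u2 => mem2 t x' (by linarith) (by linarith))
        (fun h => absurd h hts) (by linarith)
      have hR := flankR t ht (a₂ + t) β
        (fun x' u1 u2 => mem2 t x' (by linarith) (by linarith))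
        (fun h => absurd h hts') (by linarith)
      have hst : s < t := by linarith
      have := hSep s hs t ht hst
      linarith
    · have hb1 : a₃ ≤ x - t := hm.1
      have hb2 : x - t < a₃ + γ := hm.2
      have hL := flankL t ht (a₃ + t) γ
        (fun x' u1 u2 => mem3 t x' (by linarith) (by linarith))
        (fun h => by rw [h]; convert tr3 s using 2 <;> ring) (by linarith)
      have hR := flankR t ht (a₃ + t) γ
        (fun x' u1 u2 => mem3 t x' (by linarith) (by linarith))
        (fun h => by rw [h]; convert tr3 (s + α) using 2 <;> ring) (by linarith)
      exact ⟨hL, by linarith, by linarith, hR⟩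
  -- Claim 1: a C interval starts exactly at the left edge of the gap
  have hδ : (0:ℝ) < min γ (α - β) := lt_min hγ (by linarith)
  have hδγ : min γ (α - β) ≤ γ := min_le_left _ _
  have hδαβ : min γ (α - β) ≤ α - β := min_le_right _ _
  obtain ⟨x₀, hx₀1, hx₀2, t₀, ⟨ht₀, hmem₀⟩, -⟩ :=
    keyL Ω T htile (a₂ + s + β) (a₂ + s + β + min γ (α - β)) (by linarith)
  obtain ⟨hq01, hq02, hq03, hq04⟩ := hS x₀ t₀ hx₀1 (by linarith) ht₀ hmem₀
  have hq0 : a₃ + t₀ = a₂ + s + β := by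
    by_contra hne
    have hlt : a₂ + s + β < a₃ + t₀ := lt_of_le_of_ne hq01 (Ne.symm hne)
    obtain ⟨x₁, hx₁1, hx₁2, t₁, ⟨ht₁, hmem₁⟩, -⟩ := keyL Ω T htile (a₂ + s + β) (a₃ + t₀) hlt
    obtain ⟨hp1, hp2, hp3, hp4⟩ := hS x₁ t₁ hx₁1 (by linarith) ht₁ hmem₁
    have hne' : t₀ ≠ t₁ := by intro h; rw [h] at hq02; linarith
    have hmin1 : min (a₃ + t₀ + γ) (a₃ + t₁ + γ) ≤ a₃ + t₀ + γ := min_le_left _ _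
    have hmin2 : min (a₃ + t₀ + γ) (a₃ + t₁ + γ) ≤ a₃ + t₁ + γ := min_le_right _ _
    exact nodL Ω T htile ht₀ ht₁ hne'
      (lt_min (by linarith) (by linarith) : a₃ + t₀ < min (a₃ + t₀ + γ) (a₃ + t₁ + γ))
      (fun x h1 h2 => mem3 t₀ x (by linarith) (by linarith))
      (fun x h1 h2 => mem3 t₁ x (by linarith) (by linarith))
  have hγle : γ ≤ α - β := by linarith
  rcases lt_or_eq_of_le hγle with hlt | heq
  · exfalso
    have hmin1 : min (a₂ + s + β + γ + γ) (a₂ + s + α) ≤ a₂ + s + β + γ + γ := min_le_left _ _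
    have hmin2 : min (a₂ + s + β + γ + γ) (a₂ + s + α) ≤ a₂ + s + α := min_le_right _ _
    obtain ⟨x₂, hx₂1, hx₂2, t₂, ⟨ht₂, hmem₂⟩, -⟩ :=
      keyL Ω T htile (a₂ + s + β + γ) (min (a₂ + s + β + γ + γ) (a₂ + s + α))
        (lt_min (by linarith) (by linarith))
    obtain ⟨hr1, hr2, hr3, hr4⟩ := hS x₂ t₂ (by linarith) (by linarith) ht₂ hmem₂
    have ht₂0 : t₀ ≠ t₂ := by intro h; rw [← h] at hr3; linarith
    have hq2 : a₂ + s + β + γ ≤ a₃ + t₂ := by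
      by_contra hq
      push_neg at hq
      have hmin3 : min (a₃ + t₂ + γ) (a₂ + s + β + γ) ≤ a₃ + t₂ + γ := min_le_left _ _
      have hmin4 : min (a₃ + t₂ + γ) (a₂ + s + β + γ) ≤ a₂ + s + β + γ := min_le_right _ _
      exact nodL Ω T htile ht₀ ht₂ ht₂0
        (lt_min (by linarith) hq : a₃ + t₂ < min (a₃ + t₂ + γ) (a₂ + s + β + γ))
        (fun x h1 h2 => mem3 t₀ x (by linarith) (by linarith))
        (fun x h1 h2 => mem3 t₂ x (by linarith) (by linarith))
    have hlt02 : t₀ < t₂ := by linarith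
    have := hSep t₀ ht₀ t₂ ht₂ hlt02
    linarith
  · exact heq

theorem stmt0 (a₁ a₂ a₃ ℓA ℓB ℓC : ℝ) (T : Set ℝ)
    (hA : 0 < ℓA) (hB : 0 < ℓB) (hC : 0 < ℓC)
    (hsum : ℓA + ℓB + ℓC = 1)
    (hd1 : Disjoint (Set.Ico a₁ (a₁ + ℓA)) (Set.Ico a₂ (a₂ + ℓB)))
    (hd2 : Disjoint (Set.Ico a₁ (a₁ + ℓA)) (Set.Ico a₃ (a₃ + ℓC)))
    (hd3 : Disjoint (Set.Ico a₂ (a₂ + ℓB)) (Set.Ico a₃ (a₃ + ℓC)))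
    (htile : ∀ᵐ x : ℝ ∂volume, ∃! t, t ∈ T ∧ x - t ∈
      (Set.Ico a₁ (a₁ + ℓA) ∪ Set.Ico a₂ (a₂ + ℓB) ∪ Set.Ico a₃ (a₃ + ℓC)))
    (hAA : ∃ s ∈ T, ∃ t ∈ T, t = s + ℓA) :
    ℓA = 1 / 2 ∨ (ℓA = 1 / 3 ∧ ℓB = 1 / 3 ∧ ℓC = 1 / 3) := by
  obtain ⟨s, hsT, t, htT, ht⟩ := hAA
  subst ht
  rcases lt_or_ge ℓB ℓA with h | hBA
  · have := core a₁ a₂ a₃ ℓA ℓB ℓC s T hA hB hC hd1 hd3 htile hsT htT h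
    left; linarith
  rcases lt_or_ge ℓC ℓA with h | hCA
  · have htile' : ∀ᵐ x : ℝ ∂volume, ∃! t, t ∈ T ∧ x - t ∈
        (Set.Ico a₁ (a₁ + ℓA) ∪ Set.Ico a₃ (a₃ + ℓC) ∪ Set.Ico a₂ (a₂ + ℓB)) := by
      have hre : Set.Ico a₁ (a₁ + ℓA) ∪ Set.Ico a₂ (a₂ + ℓB) ∪ Set.Ico a₃ (a₃ + ℓC)
          = Set.Ico a₁ (a₁ + ℓA) ∪ Set.Ico a₃ (a₃ + ℓC) ∪ Set.Ico a₂ (a₂ + ℓB) :=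
        Set.union_right_comm _ _ _
      rw [← hre]
      exact htile
    have := core a₁ a₃ a₂ ℓA ℓC ℓB s T hA hC hB hd2 hd3.symm htile' hsT htT h
    left; linarith
  -- now ℓA ≤ ℓB and ℓA ≤ ℓC; get the reverse inequalities
  have hBle : ℓB ≤ ℓA := by
    by_contra h
    push_neg at h
    exact nodL _ T htile hsT htT (ne_of_lt (by linarith : s < s + ℓA))
      (by linarith : a₂ + s + ℓA < a₂ + s + ℓB)
      (fun x h1 h2 => Set.mem_union_left _ (Set.mem_union_right _
        ⟨by linarith, by linarith⟩))
      (fun x h1 h2 => Set.mem_union_left _ (Set.mem_union_right _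
        ⟨by linarith, by linarith⟩))
  have hCle : ℓC ≤ ℓA := by
    by_contra h
    push_neg at h
    exact nodL _ T htile hsT htT (ne_of_lt (by linarith : s < s + ℓA))
      (by linarith : a₃ + s + ℓA < a₃ + s + ℓC)
      (fun x h1 h2 => Set.mem_union_right _ ⟨by linarith, by linarith⟩)
      (fun x h1 h2 => Set.mem_union_right _ ⟨by linarith, by linarith⟩)
  right
  refine ⟨by linarith, by linarith, by linarith⟩
end

section
/- Let A = {a₁, ..., a_k} be distinct integers with k = p^α for a prime p and positive integer α. For i ≠ j let e_{ij} be the largest integer with p^{e_{ij}} dividing a_i − a_j, and let S = {e_{ij} : i ≠ j}. Then A tiles ℤ by translations if and only if S has at most α distinct elements. -/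
/-!
Let `ℓ j` be the number of residues of `A` modulo `p ^ j`, and `S` the set of valuations
`v_p (a - b)`. Passing from `p ^ j` to `p ^ (j + 1)`, `ℓ` grows by a factor at most `p`, and it
grows at all exactly when `j ∈ S`; as `ℓ` climbs from `1` to `#A = p ^ α`, always `α ≤ #S`.

If `#S = α`, then `A` tiles with the integers whose base-`p` digits vanish at the positions in `S`:
when `a + t ≡ a' + t'` and `e = v_p (a - a') ∈ S`, the congruence `t ≡ t' mod p ^ e` together
with equal `e`-th digits gives `t ≡ t' mod p ^ (e + 1)`, hence `p ^ (e + 1) ∣ a - a'`.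
Injectivity modulo `p ^ N` and a count of digit patterns give a tiling of `ℤ / p ^ N`.

Conversely, a tiling of `ℤ` by a finite set is periodic, so `A ⊕ B = ℤ / n` for a finite `B`,
i.e. `A(X) B(X) ≡ 1 + X + ⋯ + X ^ (n - 1) mod X ^ n - 1`. Each `Φ_{p^k}` with `p ^ k ∣ n` divides
`A(X)` or `B(X)`, and evaluating at `1` shows that exactly `α` of them divide `A(X)`. A factor
`Φ_{p^(j+1)}` of `A(X)` makes the residues of `A` modulo `p ^ (j + 1)` fill whole classes modulo
`p ^ j`, so `ℓ` grows by the full factor `p` at these `α` levels; since `ℓ` only reaches `p ^ α`,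
it cannot grow anywhere else, and `S` is contained in these `α` levels.
-/

def TilesZ (A : Finset ℤ) : Prop :=
  ∃ T : Set ℤ, ∀ n : ℤ, ∃! q : ℤ × ℤ, q.1 ∈ A ∧ q.2 ∈ T ∧ q.1 + q.2 = n

open Finset Polynomial

namespace Newman

/-! ### Residues modulo powers of `p` -/

def valuationSet (p : ℕ) (A : Finset ℤ) : Finset ℕ :=
  ((A ×ˢ A).filter (fun q => q.1 ≠ q.2)).image (fun q => padicValInt p (q.1 - q.2))

def residues (m : ℤ) (A : Finset ℤ) : Finset ℤ := A.image (· % m)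

variable {p : ℕ} {A : Finset ℤ}

theorem mem_valuationSet {e : ℕ} :
    e ∈ valuationSet p A ↔ ∃ a ∈ A, ∃ b ∈ A, a ≠ b ∧ padicValInt p (a - b) = e := by
  simp [valuationSet, and_assoc]

theorem modEq_pow_iff_le_padicValInt [Fact p.Prime] {a b : ℤ} (hab : a ≠ b) (k : ℕ) :
    a ≡ b [ZMOD (p : ℤ) ^ k] ↔ k ≤ padicValInt p (a - b) := by
  rw [Int.modEq_comm, Int.modEq_iff_dvd, padicValInt_dvd_iff, or_iff_right (sub_ne_zero.2 hab)]

theorem residues_eq_image_residues {k m : ℤ} (h : k ∣ m) :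
    residues k A = (residues m A).image (· % k) := by
  rw [residues, residues, image_image]
  exact image_congr fun a _ => (Int.emod_emod_of_dvd a h).symm

theorem card_residues_le_of_dvd {k m : ℤ} (h : k ∣ m) : #(residues k A) ≤ #(residues m A) := by
  rw [residues_eq_image_residues h]
  exact card_image_le

theorem card_residues_one_le : #(residues 1 A) ≤ 1 :=
  card_le_one.2 (by simp [residues])

theorem card_residues_pos {m : ℤ} (hA : A.Nonempty) : 0 < #(residues m A) :=
  (hA.image _).card_pos

theorem injOn_add_mul {k : ℤ} (hk : 0 < k) (t : Finset ℕ) :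
    Set.InjOn (fun q : ℤ × ℕ => q.1 + k * q.2) ↑(residues k A ×ˢ t) := by
  rintro ⟨_, i⟩ hq ⟨_, i'⟩ hq' h
  simp only [residues, coe_product, Set.mem_prod, coe_image, Set.mem_image, mem_coe] at hq hq' h
  obtain ⟨⟨a, -, rfl⟩, -⟩ := hq
  obtain ⟨⟨a', -, rfl⟩, -⟩ := hq'
  have hr : a % k = a' % k := by
    simpa [Int.add_mul_emod_self_left, Int.emod_emod] using congrArg (· % k) h
  rw [hr, add_right_inj, mul_right_inj' hk.ne', Nat.cast_inj] at h
  rw [hr, h]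

theorem residues_mul_subset {k : ℤ} (hk : 0 < k) {d : ℕ} (hd : 0 < d) :
    residues (k * d) A ⊆ (residues k A ×ˢ range d).image (fun q => q.1 + k * q.2) := by
  intro x hx
  obtain ⟨a, ha, rfl⟩ := mem_image.1 hx
  have hkd : 0 < k * d := mul_pos hk (by exact_mod_cast hd)
  have hlt : a % (k * d) / k < d :=
    Int.ediv_lt_of_lt_mul hk (by rw [mul_comm (d : ℤ)]; exact Int.emod_lt_of_pos a hkd)
  have hnn : 0 ≤ a % (k * d) / k := Int.ediv_nonneg (Int.emod_nonneg a hkd.ne') hk.le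
  refine mem_image.2 ⟨(a % k, (a % (k * d) / k).toNat), mem_product.2
    ⟨mem_image_of_mem _ ha, mem_range.2 (by omega)⟩, ?_⟩
  rw [Int.toNat_of_nonneg hnn, ← Int.emod_emod_of_dvd a (dvd_mul_right k d)]
  exact Int.emod_add_mul_ediv _ _

theorem card_residues_mul_le {k : ℤ} (hk : 0 < k) {d : ℕ} (hd : 0 < d) :
    #(residues (k * d) A) ≤ #(residues k A) * d :=
  (card_le_card (residues_mul_subset hk hd)).trans (card_image_le.trans (by simp))

theorem card_residues_pow_succ_le [Fact p.Prime] {j : ℕ} (hj : j ∉ valuationSet p A) :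
    #(residues ((p : ℤ) ^ (j + 1)) A) ≤ #(residues ((p : ℤ) ^ j) A) := by
  rw [residues_eq_image_residues (pow_dvd_pow (p : ℤ) j.le_succ), card_image_of_injOn]
  simp only [residues, coe_image, Set.InjOn, Set.mem_image, mem_coe, forall_exists_index, and_imp,
    forall_apply_eq_imp_iff₂]
  intro a ha b hb hab
  by_contra hne
  have hab' : a ≠ b := fun h => hne (h ▸ rfl)
  rw [Int.emod_emod_of_dvd _ (pow_dvd_pow _ j.le_succ),
    Int.emod_emod_of_dvd _ (pow_dvd_pow _ j.le_succ)] at hab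
  have h1 := (modEq_pow_iff_le_padicValInt hab' j).1 hab
  have h2 := mt (modEq_pow_iff_le_padicValInt hab' (j + 1)).2 hne
  exact hj (mem_valuationSet.2 ⟨a, ha, b, hb, hab', by omega⟩)

theorem card_residues_pow_lt [Fact p.Prime] {j : ℕ} (hj : j ∈ valuationSet p A) :
    #(residues ((p : ℤ) ^ j) A) < #(residues ((p : ℤ) ^ (j + 1)) A) := by
  obtain ⟨a, ha, b, hb, hab, rfl⟩ := mem_valuationSet.1 hj
  rw [residues_eq_image_residues (pow_dvd_pow (p : ℤ) (padicValInt p (a - b)).le_succ)]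
  refine card_image_le.lt_of_ne fun h => ?_
  have := card_image_iff.1 h (mem_image_of_mem _ ha) (mem_image_of_mem _ hb) (by
    simp only [Int.emod_emod_of_dvd _ (pow_dvd_pow _ (Nat.le_succ _))]
    exact (modEq_pow_iff_le_padicValInt hab _).2 le_rfl)
  have := (modEq_pow_iff_le_padicValInt hab _).1 this
  omega

theorem card_residues_pow_eq_card [Fact p.Prime] {N : ℕ} (hN : valuationSet p A ⊆ range N) :
    #(residues ((p : ℤ) ^ N) A) = #A := by
  refine card_image_of_injOn fun a ha b hb hab => ?_
  by_contra hne
  have := mem_range.1 (hN (mem_valuationSet.2 ⟨a, ha, b, hb, hne, rfl⟩))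
  have := (modEq_pow_iff_le_padicValInt hne N).1 hab
  omega

section Growth

theorem card_inter_range_succ (J : Finset ℕ) (n : ℕ) :
    #(J ∩ range (n + 1)) = #(J ∩ range n) + if n ∈ J then 1 else 0 := by
  rw [range_add_one]
  split_ifs with h
  · rw [inter_insert_of_mem h, card_insert_of_notMem (by simp)]
  · rw [inter_insert_of_notMem h, add_zero]

variable {f : ℕ → ℕ}

theorem le_pow_card_inter_range {S : Finset ℕ} (h0 : f 0 ≤ 1) (hmul : ∀ j, f (j + 1) ≤ f j * p)
    (hS : ∀ j ∉ S, f (j + 1) ≤ f j) (n : ℕ) : f n ≤ p ^ #(S ∩ range n) := by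
  induction n with
  | zero => simpa using h0
  | succ n ih =>
    rw [card_inter_range_succ]
    split_ifs with h
    · exact (hmul n).trans (Nat.mul_le_mul_right p ih)
    · exact (hS n h).trans ih

theorem pow_card_inter_range_le {J : Finset ℕ} (h0 : 1 ≤ f 0) (hmono : ∀ j, f j ≤ f (j + 1))
    (hJ : ∀ j ∈ J, f j * p ≤ f (j + 1)) (n : ℕ) : p ^ #(J ∩ range n) ≤ f n := by
  induction n with
  | zero => simpa using h0
  | succ n ih =>
    rw [card_inter_range_succ]
    split_ifs with h
    · exact (Nat.mul_le_mul_right p ih).trans (hJ n h)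
    · exact ih.trans (hmono n)

theorem pow_card_inter_range_lt {J : Finset ℕ} {e : ℕ} (hp : 0 < p) (h0 : 1 ≤ f 0)
    (hmono : ∀ j, f j ≤ f (j + 1)) (hJ : ∀ j ∈ J, f j * p ≤ f (j + 1)) (he : e ∉ J)
    (hfe : f e < f (e + 1)) (n : ℕ) (hn : e < n) : p ^ #(J ∩ range n) < f n := by
  induction n with
  | zero => omega
  | succ n ih =>
    rw [card_inter_range_succ]
    obtain rfl | hen := (Nat.lt_succ_iff.1 hn).eq_or_lt
    · rw [if_neg he, add_zero]
      exact (pow_card_inter_range_le h0 hmono hJ e).trans_lt hfe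
    split_ifs with h
    · exact (Nat.mul_lt_mul_of_pos_right (ih hen) hp).trans_le (hJ n h)
    · exact (ih hen).trans_le (hmono n)

end Growth

theorem le_card_valuationSet [Fact p.Prime] {α : ℕ} (hcard : #A = p ^ α) :
    α ≤ #(valuationSet p A) := by
  have hp := (Fact.out : p.Prime)
  obtain ⟨N, hN⟩ := (valuationSet p A).exists_nat_subset_range
  have h := le_pow_card_inter_range (f := fun j => #(residues ((p : ℤ) ^ j) A))
    (by simpa using card_residues_one_le)
    (fun j => by
      simpa [pow_succ] using card_residues_mul_le (pow_pos (Int.natCast_pos.2 hp.pos) j) hp.pos)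
    (fun j hj => card_residues_pow_succ_le hj) N
  rw [card_residues_pow_eq_card hN, hcard] at h
  exact (Nat.pow_le_pow_iff_right hp.one_lt).1
    (h.trans (Nat.pow_le_pow_right hp.pos (card_le_card inter_subset_left)))

/-! ### Sufficiency: the digit complement -/

def TilesMod (n : ℕ) (A B : Finset ℤ) : Prop :=
  ∀ m : ℤ, ∃! q : ℤ × ℤ, q.1 ∈ A ∧ q.2 ∈ B ∧ q.1 + q.2 ≡ m [ZMOD n]

theorem TilesMod.tilesZ {n : ℕ} {B : Finset ℤ} (h : TilesMod n A B) : TilesZ A := by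
  refine ⟨{t | ∃ b ∈ B, t ≡ b [ZMOD n]}, fun m => ?_⟩
  obtain ⟨⟨a, b⟩, ⟨ha, hb, hab⟩, huniq⟩ := h m
  have hmb : m - a ≡ b [ZMOD n] := by simpa [sub_eq_neg_add] using (hab.add_left (-a)).symm
  refine ⟨(a, m - a), ⟨ha, ⟨b, hb, hmb⟩, by ring⟩, ?_⟩
  rintro ⟨a', t'⟩ ⟨ha', ⟨b', hb', ht'⟩, rfl⟩
  have := huniq (a', b') ⟨ha', hb', (ht'.add_left a').symm⟩
  simp only [Prod.mk.injEq] at this ⊢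
  omega

theorem tilesMod_of_injective_of_card {n : ℕ} (hn : 0 < n) {B : Finset ℤ}
    (hinj : ∀ a ∈ A, ∀ b ∈ B, ∀ a' ∈ A, ∀ b' ∈ B, a + b ≡ a' + b' [ZMOD n] → a = a' ∧ b = b')
    (hcard : #A * #B = n) : TilesMod n A B := by
  have hsurj := surj_on_of_inj_on_of_card_le (s := A ×ˢ B) (t := Ico (0 : ℤ) n)
    (fun q _ => (q.1 + q.2) % n)
    (fun q _ => mem_Ico.2 ⟨Int.emod_nonneg _ (by omega), Int.emod_lt_of_pos _ (by omega)⟩)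
    (fun q q' hq hq' h => by
      obtain ⟨ha, hb⟩ := mem_product.1 hq
      obtain ⟨ha', hb'⟩ := mem_product.1 hq'
      exact Prod.ext_iff.2 (hinj _ ha _ hb _ ha' _ hb' h))
    (by simp [hcard])
  intro m
  obtain ⟨⟨a, b⟩, hq, hm⟩ := hsurj (m % n)
    (mem_Ico.2 ⟨Int.emod_nonneg _ (by omega), Int.emod_lt_of_pos _ (by omega)⟩)
  obtain ⟨ha, hb⟩ := mem_product.1 hq
  refine ⟨(a, b), ⟨ha, hb, hm.symm⟩, fun ⟨a', b'⟩ ⟨ha', hb', h'⟩ => ?_⟩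
  obtain ⟨rfl, rfl⟩ := hinj _ ha' _ hb' _ ha _ hb (h'.trans hm)
  rfl

theorem modEq_pow_succ_of_digit_eq {e r r' : ℕ} (h : r ≡ r' [MOD p ^ e])
    (hd : r / p ^ e % p = r' / p ^ e % p) : r ≡ r' [MOD p ^ (e + 1)] := by
  unfold Nat.ModEq at *
  rw [Nat.mod_pow_succ, Nat.mod_pow_succ, h, hd]

theorem eq_of_add_modEq_of_digits [Fact p.Prime] {N : ℕ} (hN : valuationSet p A ⊆ range N)
    {a a' : ℤ} (ha : a ∈ A) (ha' : a' ∈ A) {r r' : ℕ}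
    (hr : ∀ e ∈ valuationSet p A, r / p ^ e % p = 0)
    (hr' : ∀ e ∈ valuationSet p A, r' / p ^ e % p = 0)
    (h : a + r ≡ a' + r' [ZMOD (p : ℤ) ^ N]) : a = a' := by
  by_contra hne
  set e := padicValInt p (a - a')
  have he : e ∈ valuationSet p A := mem_valuationSet.2 ⟨a, ha, a', ha', hne, rfl⟩
  have hmod : ∀ k ≤ N, a + r ≡ a' + r' [ZMOD (p : ℤ) ^ k] :=
    fun k hk => h.of_dvd (pow_dvd_pow _ hk)
  have hre : r ≡ r' [MOD p ^ e] := by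
    rw [← Int.natCast_modEq_iff]
    push_cast
    exact ((modEq_pow_iff_le_padicValInt hne e).2 le_rfl).add_left_cancel
      (hmod e (mem_range.1 (hN he)).le)
  have hre' : (r : ℤ) ≡ r' [ZMOD (p : ℤ) ^ (e + 1)] := by
    exact_mod_cast Int.natCast_modEq_iff.2
      (modEq_pow_succ_of_digit_eq hre (by rw [hr e he, hr' e he]))
  have := (modEq_pow_iff_le_padicValInt hne (e + 1)).1
    (hre'.add_right_cancel (hmod (e + 1) (mem_range.1 (hN he))))
  omega

-- `finFunctionFinEquiv` reads `f : Fin N → Fin p` as the base-`p` digits of a number `< p ^ N`.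
def zeroDigitSet (p N : ℕ) [NeZero p] (S : Finset ℕ) : Finset ℕ :=
  (Fintype.piFinset fun i : Fin N => if (i : ℕ) ∈ S then ({0} : Finset (Fin p)) else univ).image
    fun f => (finFunctionFinEquiv f : ℕ)

theorem mem_zeroDigitSet [NeZero p] {N : ℕ} {S : Finset ℕ} {r : ℕ} (hr : r ∈ zeroDigitSet p N S) :
    r < p ^ N ∧ ∀ e ∈ S, r / p ^ e % p = 0 := by
  obtain ⟨f, hf, rfl⟩ := mem_image.1 hr
  refine ⟨(finFunctionFinEquiv f).isLt, fun e he => ?_⟩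
  by_cases heN : e < N
  · have := finFunctionFinEquiv_symm_apply_val (finFunctionFinEquiv f) ⟨e, heN⟩
    have hfe := Fintype.mem_piFinset.1 hf ⟨e, heN⟩
    simp only [he, if_true, mem_singleton] at hfe
    simp only [Equiv.symm_apply_apply, hfe] at this
    simpa using this.symm
  · rw [Nat.div_eq_of_lt ((finFunctionFinEquiv f).isLt.trans_le
      (Nat.pow_le_pow_right (Nat.pos_of_ne_zero (NeZero.ne p)) (not_lt.1 heN))), Nat.zero_mod]

theorem card_zeroDigitSet [NeZero p] {N : ℕ} {S : Finset ℕ} (hS : S ⊆ range N) :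
    #(zeroDigitSet p N S) = p ^ (N - #S) := by
  rw [zeroDigitSet,
    card_image_of_injective _ fun f g h => finFunctionFinEquiv.injective (Fin.ext h),
    Fintype.card_piFinset]
  simp only [apply_ite card, card_singleton, card_univ, Fintype.card_fin]
  rw [Fin.prod_univ_eq_prod_range (fun i => if i ∈ S then 1 else p), prod_ite, prod_const_one,
    one_mul, prod_const]
  congr 1
  have := card_filter_add_card_filter_not (s := range N) (· ∈ S)
  rw [filter_mem_eq_inter, inter_eq_right.2 hS, card_range] at this
  omega

theorem tilesZ_of_card_valuationSet_le [Fact p.Prime] {α : ℕ} (hcard : #A = p ^ α)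
    (hS : #(valuationSet p A) ≤ α) : TilesZ A := by
  have hp := (Fact.out : p.Prime)
  obtain ⟨N, hN⟩ := (valuationSet p A).exists_nat_subset_range
  have hα : #(valuationSet p A) = α := hS.antisymm (le_card_valuationSet hcard)
  have hαN : α ≤ N := hα ▸ (card_le_card hN).trans (card_range N).le
  refine TilesMod.tilesZ (n := p ^ N) (B := (zeroDigitSet p N (valuationSet p A)).image (↑))
    (tilesMod_of_injective_of_card (pow_pos hp.pos N) ?_ ?_)
  · simp only [mem_image]
    rintro a ha _ ⟨r, hr, rfl⟩ a' ha' _ ⟨r', hr', rfl⟩ h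
    push_cast at h
    obtain ⟨hrN, hr⟩ := mem_zeroDigitSet hr
    obtain ⟨hr'N, hr'⟩ := mem_zeroDigitSet hr'
    obtain rfl := eq_of_add_modEq_of_digits hN ha ha' hr hr' h
    refine ⟨rfl, congrArg _ (Nat.ModEq.eq_of_lt_of_lt ?_ hrN hr'N)⟩
    rw [← Int.natCast_modEq_iff]
    push_cast
    exact h.add_left_cancel' a
  · rw [card_image_of_injective _ Nat.cast_injective, card_zeroDigitSet hN, hcard, hα, ← pow_add,
      Nat.add_sub_cancel' hαN]

/-! ### Periodicity of tilings -/

theorem add_emod_sub_modEq (c y z : ℤ) : y + (z - y) % c ≡ z [ZMOD c] := by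
  simpa using (Int.mod_modEq (z - y) c).add_left y

theorem add_emod_sub_mem_Ico {c : ℕ} (hc : 0 < c) (y z : ℤ) :
    y + (z - y) % c ∈ Ico y (y + c) := by
  have h1 := Int.emod_nonneg (z - y) (by omega : (c : ℤ) ≠ 0)
  have h2 := Int.emod_lt_of_pos (z - y) (by omega : (0 : ℤ) < c)
  exact mem_Ico.2 ⟨by omega, by omega⟩

theorem eq_of_modEq_of_mem_Ico {c : ℕ} {y b b' : ℤ} (hb : b ∈ Ico y (y + c))
    (hb' : b' ∈ Ico y (y + c)) (h : b ≡ b' [ZMOD c]) : b = b' := by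
  rw [mem_Ico] at hb hb'
  have := Int.eq_zero_of_abs_lt_dvd h.dvd (abs_sub_lt_iff.2 ⟨by omega, by omega⟩)
  omega

theorem mem_iff_mem_of_modEq {T : Set ℤ} {x : ℤ} {c : ℕ} (hc : 0 < c)
    (hper : ∀ z, x ≤ z → (z ∈ T ↔ z + c ∈ T)) {z z' : ℤ} (hz : x ≤ z) (hz' : x ≤ z')
    (h : z ≡ z' [ZMOD c]) : z ∈ T ↔ z' ∈ T := by
  wlog hzz : z ≤ z' generalizing z z'
  · exact (this hz' hz h.symm (by omega)).symm
  obtain ⟨d, hd⟩ := h.dvd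
  lift d to ℕ using by nlinarith
  suffices ∀ k : ℕ, z ∈ T ↔ z + c * k ∈ T by rw [this d, ← hd, add_sub_cancel]
  intro k
  induction k with
  | zero => simp
  | succ k ih =>
    rw [ih, hper _ (le_add_of_le_of_nonneg hz (by positivity))]
    push_cast
    ring_nf

theorem exists_window_shift (T : Set ℤ) (w : ℕ) :
    ∃ x : ℤ, ∃ c : ℕ, 0 < c ∧ ∀ z, x ≤ z → z ≤ x + w → (z ∈ T ↔ z + c ∈ T) := by
  obtain ⟨k, l, hkl, hf⟩ :=
    Finite.exists_ne_map_eq_of_infinite fun k : ℕ => {d : Fin (w + 1) | (k + d : ℤ) ∈ T}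
  wlog h : k < l generalizing k l
  · exact this l k hkl.symm hf.symm (by omega)
  refine ⟨k, l - k, by omega, fun z h1 h2 => ?_⟩
  have := Set.ext_iff.1 hf ⟨(z - k).toNat, by omega⟩
  simp only [Set.mem_ofPred_eq] at this
  convert this using 2 <;> push_cast [h.le] <;> omega

def IsTilingComplement (A : Finset ℤ) (T : Set ℤ) : Prop :=
  ∀ n : ℤ, ∃! q : ℤ × ℤ, q.1 ∈ A ∧ q.2 ∈ T ∧ q.1 + q.2 = n

namespace IsTilingComplement

variable {T : Set ℤ} (hT : IsTilingComplement A T)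
include hT

theorem mem_iff_not_covered {lo : ℤ} (hlo : lo ∈ A) (hmin : ∀ a ∈ A, lo ≤ a) (z : ℤ) :
    z ∈ T ↔ ¬∃ a ∈ A, ∃ t ∈ T, t < z ∧ a + t = z + lo := by
  constructor
  · rintro hz ⟨a, ha, t, ht, htz, hat⟩
    have := (hT (z + lo)).unique (y₁ := (a, t)) (y₂ := (lo, z)) ⟨ha, ht, hat⟩
      ⟨hlo, hz, add_comm _ _⟩
    simp only [Prod.mk.injEq] at this
    omega
  · intro hnot
    obtain ⟨⟨a, t⟩, ⟨ha, ht, hat⟩, -⟩ := hT (z + lo)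
    obtain rfl : t = z := by
      by_contra hne
      have := hmin a ha
      exact hnot ⟨a, ha, t, ht, by simp only at hat; omega, hat⟩
    exact ht

-- Whether `z ∈ T` is decided by `T ∩ [z - w, z)`, so agreement on one window propagates.
theorem mem_add_iff_of_window {lo : ℤ} {w : ℕ} (hlo : lo ∈ A) (hmin : ∀ a ∈ A, lo ≤ a)
    (hmax : ∀ a ∈ A, a ≤ lo + w) {x c : ℤ}
    (hwin : ∀ z, x ≤ z → z ≤ x + w → (z ∈ T ↔ z + c ∈ T)) (z : ℤ) (hz : x ≤ z) :
    z ∈ T ↔ z + c ∈ T := by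
  suffices ∀ k : ℕ, ∀ z, x ≤ z → z < x + k → (z ∈ T ↔ z + c ∈ T) from
    this ((z - x).toNat + 1) z hz (by omega)
  intro k
  induction k with
  | zero => intro z h1 h2; omega
  | succ k ih =>
    intro z hxz hzk
    by_cases hzw : z ≤ x + w
    · exact hwin z hxz hzw
    rw [hT.mem_iff_not_covered hlo hmin, hT.mem_iff_not_covered hlo hmin, not_iff_not]
    constructor
    · rintro ⟨a, ha, t, ht, htz, hat⟩
      have := hmax a ha
      exact ⟨a, ha, t + c, (ih t (by omega) (by omega)).1 ht, by omega, by omega⟩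
    · rintro ⟨a, ha, t, ht, htz, hat⟩
      have := hmax a ha
      exact ⟨a, ha, t - c, (ih (t - c) (by omega) (by omega)).2 (by simpa using ht), by omega,
        by omega⟩

theorem tilesMod_of_periodic [DecidablePred (· ∈ T)] {hi : ℤ} (hmax : ∀ a ∈ A, a ≤ hi) {x : ℤ}
    {c : ℕ} (hc : 0 < c) (hper : ∀ z, x ≤ z → (z ∈ T ↔ z + c ∈ T)) :
    TilesMod c A ((Ico x (x + c)).filter (· ∈ T)) := by
  intro m
  -- every cover of `m'` uses a translate `≥ x`, where `T` is periodic
  set m' := x + hi + (m - (x + hi)) % c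
  have hm' : m' ≡ m [ZMOD c] := add_emod_sub_modEq c (x + hi) m
  have hm'x : x + hi ≤ m' := (mem_Ico.1 (add_emod_sub_mem_Ico hc (x + hi) m)).1
  obtain ⟨⟨a, t⟩, ⟨ha, ht, hat : a + t = m'⟩, huniq⟩ := hT m'
  have htx : x ≤ t := by linarith [hmax a ha]
  have hcanon := add_emod_sub_mem_Ico hc x t
  refine ⟨(a, x + (t - x) % c), ⟨ha, mem_filter.2 ⟨hcanon, ?_⟩, ?_⟩, ?_⟩
  · exact (mem_iff_mem_of_modEq hc hper htx (mem_Ico.1 hcanon).1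
      (add_emod_sub_modEq c x t).symm).1 ht
  · exact ((add_emod_sub_modEq c x t).add_left a).trans (hat ▸ hm')
  rintro ⟨a', b'⟩ ⟨ha', hb', hsum⟩
  obtain ⟨hb'I, hb'T⟩ := mem_filter.1 hb'
  have hb't : b' ≡ m' - a' [ZMOD c] :=
    Int.ModEq.add_left_cancel' a' (by simpa using hsum.trans hm'.symm)
  have ht' : m' - a' ∈ T :=
    (mem_iff_mem_of_modEq hc hper (mem_Ico.1 hb'I).1 (by linarith [hmax a' ha']) hb't).1 hb'T
  obtain ⟨rfl, rfl⟩ := Prod.ext_iff.1 (huniq (a', m' - a') ⟨ha', ht', by ring⟩)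
  exact Prod.ext rfl
    (eq_of_modEq_of_mem_Ico hb'I hcanon (hb't.trans (add_emod_sub_modEq c x _).symm))

end IsTilingComplement

theorem exists_tilesMod_of_tilesZ (hA : A.Nonempty) (h : TilesZ A) :
    ∃ n > 0, ∃ B, TilesMod n A B := by
  classical
  obtain ⟨T, hT : IsTilingComplement A T⟩ := h
  obtain ⟨x, c, hc, hwin⟩ := exists_window_shift T (A.max' hA - A.min' hA).toNat
  have hper := hT.mem_add_iff_of_window (A.min'_mem hA) (fun a ha => A.min'_le a ha)
    (fun a ha => by have := A.le_max' a ha; omega) hwin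
  exact ⟨c, hc, _, hT.tilesMod_of_periodic (hi := A.max' hA) (fun a ha => A.le_max' a ha) hc hper⟩

/-! ### Mask polynomials and cyclotomic factors -/

theorem X_pow_sub_one_dvd_X_pow_sub_X_pow {R : Type*} [CommRing R] {n u v : ℕ}
    (h : u ≡ v [MOD n]) : (X ^ n - 1 : R[X]) ∣ X ^ u - X ^ v := by
  wlog huv : u ≤ v generalizing u v
  · rw [← dvd_neg, neg_sub]
    exact this h.symm (by omega)
  obtain ⟨k, hk⟩ := (Nat.modEq_iff_dvd' huv).1 h
  rw [show v = u + n * k by omega, pow_add, ← dvd_neg, neg_sub, ← mul_sub_one]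
  exact (pow_one_sub_dvd_pow_mul_sub_one X n k).mul_left _

-- The mask polynomial `∑_{a ∈ A} X ^ a` reduced modulo `X ^ m - 1`.
noncomputable def maskPoly (m : ℕ) (A : Finset ℤ) : ℤ[X] := ∑ a ∈ A, X ^ (a % (m : ℤ)).toNat

theorem eval_one_maskPoly (m : ℕ) : (maskPoly m A).eval 1 = #A := by
  simp [maskPoly, eval_finsetSum]

theorem coeff_maskPoly (m σ : ℕ) :
    (maskPoly m A).coeff σ = #(A.filter fun a => (a % (m : ℤ)).toNat = σ) := by
  simp [maskPoly, coeff_X_pow, eq_comm]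

theorem natCast_toNat_emod {m : ℕ} (hm : 0 < m) (a : ℤ) : ((a % (m : ℤ)).toNat : ℤ) = a % m :=
  Int.toNat_of_nonneg (Int.emod_nonneg a (by omega))

theorem natDegree_maskPoly_lt {m : ℕ} (hm : 0 < m) : (maskPoly m A).natDegree < m := by
  refine lt_of_le_of_lt (natDegree_sum_le_of_forall_le _ _ (n := m - 1) fun a _ => ?_) (by omega)
  rw [natDegree_X_pow]
  have := natCast_toNat_emod hm a
  have := Int.emod_lt_of_pos a (by omega : (0 : ℤ) < m)
  omega

theorem toNat_emod_modEq {m k : ℕ} (hm : 0 < m) (hk : k ∣ m) (a : ℤ) :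
    (a % (m : ℤ)).toNat ≡ (a % (k : ℤ)).toNat [MOD k] := by
  rw [← Int.natCast_modEq_iff, natCast_toNat_emod hm,
    natCast_toNat_emod (Nat.pos_of_dvd_of_pos hk hm)]
  exact ((Int.mod_modEq a m).of_dvd (Int.natCast_dvd_natCast.2 hk)).trans (Int.mod_modEq a k).symm

theorem X_pow_sub_one_dvd_maskPoly_sub {k m : ℕ} (hm : 0 < m) (hk : k ∣ m) :
    X ^ k - 1 ∣ maskPoly m A - maskPoly k A := by
  rw [maskPoly, maskPoly, ← sum_sub_distrib]
  exact dvd_sum fun a _ => X_pow_sub_one_dvd_X_pow_sub_X_pow (toNat_emod_modEq hm hk a)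

theorem cyclotomic_dvd_maskPoly_of_dvd {k m : ℕ} (hm : 0 < m) (hk : k ∣ m)
    (h : cyclotomic k ℤ ∣ maskPoly m A) : cyclotomic k ℤ ∣ maskPoly k A :=
  (dvd_sub_right h).1
    ((cyclotomic.dvd_X_pow_sub_one k ℤ).trans (X_pow_sub_one_dvd_maskPoly_sub hm hk))

theorem TilesMod.sum_range_eq_sum_product {M : Type*} [AddCommMonoid M] {n : ℕ} {B : Finset ℤ}
    (h : TilesMod n A B) (hn : 0 < n) (f : ℕ → M) :
    ∑ i ∈ range n, f i = ∑ q ∈ A ×ˢ B, f ((q.1 + q.2) % (n : ℤ)).toNat := by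
  symm
  refine sum_nbij (fun q => ((q.1 + q.2) % (n : ℤ)).toNat) ?_ ?_ ?_ fun _ _ => rfl
  · intro q _
    have := natCast_toNat_emod hn (q.1 + q.2)
    have := Int.emod_lt_of_pos (q.1 + q.2) (by omega : (0 : ℤ) < n)
    exact mem_range.2 (by omega)
  · rintro ⟨a, b⟩ hq ⟨a', b'⟩ hq' hqq
    simp only [coe_product, Set.mem_prod, mem_coe] at hq hq'
    have hmod : a + b ≡ a' + b' [ZMOD n] := by
      have := congrArg (Nat.cast : ℕ → ℤ) hqq
      rwa [natCast_toNat_emod hn, natCast_toNat_emod hn] at this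
    exact (h (a' + b')).unique ⟨hq.1, hq.2, hmod⟩ ⟨hq'.1, hq'.2, rfl⟩
  · intro i hi
    obtain ⟨⟨a, b⟩, ⟨ha, hb, hab⟩, -⟩ := h i
    refine ⟨(a, b), mem_product.2 ⟨ha, hb⟩, ?_⟩
    have hi' : (i : ℤ) < n := by simpa using hi
    show ((a + b) % (n : ℤ)).toNat = i
    rw [hab, Int.emod_eq_of_lt (by omega) hi', Int.toNat_natCast]

theorem TilesMod.card_mul_card {n : ℕ} {B : Finset ℤ} (h : TilesMod n A B) (hn : 0 < n) :
    #A * #B = n := by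
  simpa [card_product] using (h.sum_range_eq_sum_product hn fun _ => (1 : ℕ)).symm

theorem TilesMod.X_pow_sub_one_dvd_maskPoly_mul_sub {n : ℕ} {B : Finset ℤ} (h : TilesMod n A B)
    (hn : 0 < n) : X ^ n - 1 ∣ maskPoly n A * maskPoly n B - ∑ i ∈ range n, X ^ i := by
  rw [h.sum_range_eq_sum_product hn, maskPoly, maskPoly, sum_mul_sum, ← sum_product',
    ← sum_sub_distrib]
  refine dvd_sum fun q _ => ?_
  rw [← pow_add]
  refine X_pow_sub_one_dvd_X_pow_sub_X_pow ?_
  rw [← Int.natCast_modEq_iff]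
  push_cast [natCast_toNat_emod hn]
  exact ((Int.mod_modEq _ _).add (Int.mod_modEq _ _)).trans (Int.mod_modEq _ _).symm

theorem cyclotomic_dvd_or_of_dvd_mul_sub {n d : ℕ} {F G : ℤ[X]} (hn : 0 < n) (hd : d ∣ n)
    (hd1 : d ≠ 1) (h : X ^ n - 1 ∣ F * G - ∑ i ∈ range n, X ^ i) :
    cyclotomic d ℤ ∣ F ∨ cyclotomic d ℤ ∣ G := by
  have hgeom := cyclotomic_dvd_geom_sum_of_dvd ℤ hd hd1
  have hXn : cyclotomic d ℤ ∣ X ^ n - 1 := hgeom.trans ⟨X - 1, (geom_sum_mul X n).symm⟩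
  refine (cyclotomic.irreducible (Nat.pos_of_dvd_of_pos hd hn)).prime.dvd_or_dvd ?_
  simpa using dvd_add (hXn.trans h) hgeom

theorem pow_card_dvd_eval_one [Fact p.Prime] {F : ℤ[X]} {W : Finset ℕ}
    (h : ∀ j ∈ W, cyclotomic (p ^ (j + 1)) ℤ ∣ F) : (p : ℤ) ^ #W ∣ F.eval 1 := by
  -- distinct cyclotomic polynomials are coprime over `ℚ`, and a monic divisor descends to `ℤ`
  have hprod : ∏ j ∈ W, cyclotomic (p ^ (j + 1)) ℤ ∣ F := by
    rw [← map_dvd_map (Int.castRingHom ℚ) (RingHom.injective_int _)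
      (monic_prod_of_monic _ _ fun j _ => cyclotomic.monic _ ℤ), Polynomial.map_prod]
    simp only [map_cyclotomic]
    refine prod_dvd_of_coprime (fun i _ j _ hij => cyclotomic.isCoprime_rat fun hpow => hij ?_)
      fun j hj => by simpa using map_dvd (mapRingHom (Int.castRingHom ℚ)) (h j hj)
    exact Nat.succ_injective (Nat.pow_right_injective (Fact.out : p.Prime).two_le hpow)
  simpa [eval_prod, eval_one_cyclotomic_prime_pow] using eval_dvd (x := 1) hprod

open scoped Classical in
theorem TilesMod.card_filter_cyclotomic_dvd [Fact p.Prime] {n α : ℕ} {B : Finset ℤ}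
    (h : TilesMod n A B) (hn : 0 < n) (hcard : #A = p ^ α) :
    #((range (n.factorization p)).filter fun j => cyclotomic (p ^ (j + 1)) ℤ ∣ maskPoly n A) =
      α := by
  have hp := (Fact.out : p.Prime)
  set γ := n.factorization p
  set J := (range γ).filter fun j => cyclotomic (p ^ (j + 1)) ℤ ∣ maskPoly n A
  set K := (range γ).filter fun j => cyclotomic (p ^ (j + 1)) ℤ ∣ maskPoly n B
  have hprod := h.X_pow_sub_one_dvd_maskPoly_mul_sub hn
  have hAB := h.card_mul_card hn
  have hJ : #J ≤ α := by
    have := pow_card_dvd_eval_one (W := J) fun j hj => (mem_filter.1 hj).2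
    rw [eval_one_maskPoly, hcard] at this
    exact (Nat.pow_dvd_pow_iff_le_right hp.one_lt).1 (by exact_mod_cast this)
  have hK : α + #K ≤ γ := by
    have := pow_card_dvd_eval_one (W := K) fun j hj => (mem_filter.1 hj).2
    rw [eval_one_maskPoly] at this
    rw [← hp.pow_dvd_iff_le_factorization hn.ne', ← hAB, hcard, pow_add]
    exact mul_dvd_mul_left _ (by exact_mod_cast this)
  have hcover : γ ≤ #J + #K := by
    calc γ = #(range γ) := (card_range γ).symm
      _ ≤ #(J ∪ K) := card_le_card fun j hj => by
          have hjn : p ^ (j + 1) ∣ n := (hp.pow_dvd_iff_le_factorization hn.ne').2 (mem_range.1 hj)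
          rcases cyclotomic_dvd_or_of_dvd_mul_sub hn hjn
            (Nat.one_lt_pow j.succ_ne_zero hp.one_lt).ne' hprod with hA | hB
          · exact mem_union_left _ (mem_filter.2 ⟨hj, hA⟩)
          · exact mem_union_right _ (mem_filter.2 ⟨hj, hB⟩)
      _ ≤ #J + #K := card_union_le J K
  omega

-- From `Φ_{p^(j+1)} * (X ^ p ^ j - 1) = X ^ p ^ (j + 1) - 1`: if `F = Φ_{p^(j+1)} * d` then
-- `F * (X ^ p ^ j - 1) = d * (X ^ p ^ (j + 1) - 1)` with `deg d < p ^ j`; compare coefficients.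
theorem coeff_add_pow_eq_of_cyclotomic_dvd [Fact p.Prime] {F : ℤ[X]} {j σ : ℕ}
    (hF : F.natDegree < p ^ (j + 1)) (hdvd : cyclotomic (p ^ (j + 1)) ℤ ∣ F)
    (hσ : σ + p ^ j < p ^ (j + 1)) : F.coeff (σ + p ^ j) = F.coeff σ := by
  have hp := (Fact.out : p.Prime)
  obtain ⟨d, rfl⟩ := hdvd
  rcases eq_or_ne d 0 with rfl | hd
  · simp
  have hdeg : d.natDegree < p ^ j := by
    rw [natDegree_mul (cyclotomic_ne_zero _ ℤ) hd, natDegree_cyclotomic,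
      Nat.totient_prime_pow_succ hp] at hF
    have : p ^ (j + 1) = p ^ j * (p - 1) + p ^ j := by
      rw [pow_succ, ← Nat.mul_succ, Nat.succ_eq_add_one, Nat.sub_add_cancel hp.one_le]
    omega
  have key : cyclotomic (p ^ (j + 1)) ℤ * d * X ^ p ^ j - cyclotomic (p ^ (j + 1)) ℤ * d =
      d * X ^ p ^ (j + 1) - d := by
    linear_combination d * cyclotomic_prime_pow_mul_X_pow_sub_one ℤ p j
  replace key := congrArg (coeff · (σ + p ^ j)) key
  simp only [coeff_sub, coeff_mul_X_pow'] at key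
  rw [if_pos (Nat.le_add_left _ _), Nat.add_sub_cancel, if_neg (not_le.2 hσ),
    coeff_eq_zero_of_natDegree_lt (hdeg.trans_le le_add_self)] at key
  linarith

theorem add_pow_mul_lt_pow_succ {j ρ i : ℕ} (hρ : ρ < p ^ j) (hi : i < p) :
    ρ + p ^ j * i < p ^ (j + 1) :=
  calc ρ + p ^ j * i < p ^ j * (i + 1) := by rw [mul_add_one]; omega
    _ ≤ p ^ (j + 1) := by rw [pow_succ]; exact Nat.mul_le_mul_left _ hi

theorem coeff_add_pow_mul_eq_of_cyclotomic_dvd [Fact p.Prime] {F : ℤ[X]} {j ρ i : ℕ}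
    (hF : F.natDegree < p ^ (j + 1)) (hdvd : cyclotomic (p ^ (j + 1)) ℤ ∣ F) (hρ : ρ < p ^ j)
    (hi : i < p) : F.coeff (ρ + p ^ j * i) = F.coeff ρ := by
  induction i with
  | zero => simp
  | succ i ih =>
    rw [mul_add_one, ← add_assoc, coeff_add_pow_eq_of_cyclotomic_dvd hF hdvd
      (by simpa [mul_add_one, add_assoc] using add_pow_mul_lt_pow_succ hρ hi), ih (by omega)]

theorem mul_card_residues_le_of_cyclotomic_dvd [Fact p.Prime] {j : ℕ}
    (h : cyclotomic (p ^ (j + 1)) ℤ ∣ maskPoly (p ^ (j + 1)) A) :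
    #(residues ((p : ℤ) ^ j) A) * p ≤ #(residues ((p : ℤ) ^ (j + 1)) A) := by
  have hp := (Fact.out : p.Prime)
  have hpj : 0 < p ^ j := pow_pos hp.pos j
  have hdeg := natDegree_maskPoly_lt (A := A) (pow_pos hp.pos (j + 1))
  rw [show #(residues ((p : ℤ) ^ j) A) * p = #(residues ((p : ℤ) ^ j) A ×ˢ range p) by
    rw [card_product, card_range]]
  refine card_le_card_of_injOn _ ?_ (injOn_add_mul (pow_pos (Int.natCast_pos.2 hp.pos) j) _)
  rintro ⟨_, i⟩ hq
  simp only [coe_product, Set.mem_prod, mem_coe, mem_range, residues, mem_image] at hq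
  obtain ⟨⟨a, ha, rfl⟩, hi⟩ := hq
  set σ := (a % ((p ^ (j + 1) : ℕ) : ℤ)).toNat
  have hσ : (σ : ℤ) = a % (p : ℤ) ^ (j + 1) := by
    rw [natCast_toNat_emod (pow_pos hp.pos _)]
    push_cast
    rfl
  have hρ : (σ : ℤ) % (p : ℤ) ^ j = a % (p : ℤ) ^ j := by
    rw [hσ, Int.emod_emod_of_dvd _ (pow_dvd_pow _ j.le_succ)]
  have hσlt : σ < p ^ (j + 1) := by
    have := Int.emod_lt_of_pos a (pow_pos (Int.natCast_pos.2 hp.pos) (j + 1))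
    rw [← hσ] at this
    exact_mod_cast this
  -- every lift of `σ % p ^ j` modulo `p ^ (j + 1)` is hit by `A` as often as `σ` itself
  have hcoeff : (maskPoly (p ^ (j + 1)) A).coeff (σ % p ^ j + p ^ j * i) ≠ 0 := by
    rw [coeff_add_pow_mul_eq_of_cyclotomic_dvd hdeg h (Nat.mod_lt _ hpj) hi,
      ← coeff_add_pow_mul_eq_of_cyclotomic_dvd hdeg h (Nat.mod_lt _ hpj)
        ((Nat.div_lt_iff_lt_mul hpj).2 (by rwa [← pow_succ'])), Nat.mod_add_div, coeff_maskPoly]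
    exact Nat.cast_ne_zero.2 (card_ne_zero.2 ⟨a, mem_filter.2 ⟨ha, rfl⟩⟩)
  rw [coeff_maskPoly, Nat.cast_ne_zero, card_ne_zero] at hcoeff
  obtain ⟨a', ha'⟩ := hcoeff
  obtain ⟨ha'A, ha'σ⟩ := mem_filter.1 ha'
  refine mem_coe.2 (mem_image.2 ⟨a', ha'A, ?_⟩)
  have := congrArg (Nat.cast : ℕ → ℤ) ha'σ
  rw [natCast_toNat_emod (pow_pos hp.pos _)] at this
  push_cast at this
  rw [this, hρ]

theorem TilesMod.card_valuationSet_le [Fact p.Prime] {n α : ℕ} {B : Finset ℤ}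
    (h : TilesMod n A B) (hn : 0 < n) (hcard : #A = p ^ α) : #(valuationSet p A) ≤ α := by
  classical
  have hp := (Fact.out : p.Prime)
  set J := (range (n.factorization p)).filter fun j => cyclotomic (p ^ (j + 1)) ℤ ∣ maskPoly n A
  have hJ : #J = α := by convert h.card_filter_cyclotomic_dvd hn hcard
  have hA : A.Nonempty := card_pos.1 (hcard ▸ pow_pos hp.pos α)
  have hgrow : ∀ j ∈ J, #(residues ((p : ℤ) ^ j) A) * p ≤ #(residues ((p : ℤ) ^ (j + 1)) A) := by
    intro j hj
    obtain ⟨hjγ, hdvd⟩ := mem_filter.1 hj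
    exact mul_card_residues_le_of_cyclotomic_dvd (cyclotomic_dvd_maskPoly_of_dvd hn
      ((hp.pow_dvd_iff_le_factorization hn.ne').2 (mem_range.1 hjγ)) hdvd)
  refine hJ ▸ card_le_card fun e he => ?_
  by_contra heJ
  obtain ⟨N, hN⟩ := (valuationSet p A ∪ J).exists_nat_subset_range
  have := pow_card_inter_range_lt (f := fun j => #(residues ((p : ℤ) ^ j) A)) hp.pos
    (card_residues_pos hA) (fun j => card_residues_le_of_dvd (pow_dvd_pow _ j.le_succ)) hgrow heJ
    (card_residues_pow_lt he) N (mem_range.1 (hN (mem_union_left _ he)))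
  rw [inter_eq_left.2 (subset_union_right.trans hN), card_residues_pow_eq_card
    (subset_union_left.trans hN), hJ, hcard] at this
  exact lt_irrefl _ this

end Newman

theorem stmt1_general (p α : ℕ) (hp : p.Prime) (A : Finset ℤ)
    (hcard : A.card = p ^ α) :
    TilesZ A ↔
      (((A ×ˢ A).filter (fun q => q.1 ≠ q.2)).image
        (fun q => padicValInt p (q.1 - q.2))).card ≤ α := by
  have := Fact.mk hp
  refine ⟨fun h => ?_, Newman.tilesZ_of_card_valuationSet_le hcard⟩
  obtain ⟨n, hn, B, hB⟩ :=
    Newman.exists_tilesMod_of_tilesZ (card_pos.1 (hcard ▸ pow_pos hp.pos α)) h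
  exact hB.card_valuationSet_le hn hcard

/-- Newman's theorem on tilings of the integers by sets of prime-power cardinality. -/
theorem stmt1 (p α : ℕ) (hp : p.Prime) (hα : 0 < α) (A : Finset ℤ)
    (hcard : A.card = p ^ α) :
    TilesZ A ↔
      (((A ×ˢ A).filter (fun q => q.1 ≠ q.2)).image
        (fun q => padicValInt p (q.1 - q.2))).card ≤ α :=
  stmt1_general p α hp A hcard
end

section
/- Let a, b be nonzero integers not divisible by 3 times their largest common 3-power; write a = 3^j n and b = 3^k m with 3 ∤ n, 3 ∤ m. Then the set {0, a, b} tiles ℤ if and only if j = k and m − n is not divisible by 3 (equivalently, a = 3^j(3r+1) and b = 3^j(3s+2) up to swapping a and b). -/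
open Finset Function

theorem existsUnique_pair_add_iff {G : Type*} [AddCommGroup G] (A T : Set G) (x : G) :
    (∃! q : G × G, q.1 ∈ A ∧ q.2 ∈ T ∧ q.1 + q.2 = x) ↔ ∃! s, s ∈ A ∧ x - s ∈ T := by
  constructor
  · rintro ⟨⟨s, t⟩, ⟨hs, ht, rfl⟩, huniq⟩
    refine ⟨s, ⟨hs, by simpa using ht⟩, fun s' ⟨hs', ht'⟩ => ?_⟩
    exact congrArg Prod.fst (huniq (s', s + t - s') ⟨hs', ht', add_sub_cancel _ _⟩)
  · rintro ⟨s, ⟨hs, ht⟩, huniq⟩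
    refine ⟨(s, x - s), ⟨hs, ht, add_sub_cancel _ _⟩, fun ⟨s', t'⟩ ⟨hs', ht', hx⟩ => ?_⟩
    obtain rfl : s' = s := huniq s' ⟨hs', by rwa [← hx, add_sub_cancel_left]⟩
    simp [← hx]

theorem tilesZ_iff_exists_sum_indicator {A : Finset ℤ} :
    TilesZ A ↔ ∃ T : Set ℤ, ∀ x, ∑ s ∈ A, T.indicator (1 : ℤ → ℤ) (x - s) = 1 := by
  classical
  refine exists_congr fun T => forall_congr' fun x => ?_
  simp only [Set.indicator_apply, Pi.one_apply, sum_boole, Nat.cast_eq_one,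
    card_eq_one_iff_existsUnique, mem_filter]
  exact existsUnique_pair_add_iff (A : Set ℤ) T x

theorem tilesZ_zero_pair_iff {a b : ℤ} (ha : a ≠ 0) (hb : b ≠ 0) (hab : a ≠ b) :
    TilesZ {0, a, b} ↔ ∃ T : Set ℤ, ∀ x,
      T.indicator (1 : ℤ → ℤ) x + T.indicator 1 (x - a) + T.indicator 1 (x - b) = 1 := by
  rw [tilesZ_iff_exists_sum_indicator]
  simp [sum_insert, ha.symm, hb.symm, hab, add_assoc]

theorem Function.Periodic.of_dvd {α : Type*} {f : ℤ → α} {c t : ℤ}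
    (h : Periodic f c) (hct : c ∣ t) : Periodic f t := by
  obtain ⟨k, rfl⟩ := hct
  simpa [mul_comm] using h.int_mul k

section TileEquation

variable {F : ℤ → ℤ} {a b : ℤ}

/- The six tile equations used here, weighted by the coefficients of `(1 + X + Y)²`, add up to
`(1 + X + Y)³ F = 9`. -/
theorem three_dvd_add_add_sub_three_mul (hE : ∀ y, F y + F (y - a) + F (y - b) = 1) (x : ℤ) :
    3 ∣ F x + F (x - 3 * a) + F (x - 3 * b) := by
  have e₀ := hE x
  have e₁ := hE (x - a)
  have e₂ := hE (x - b)
  have e₃ := hE (x - a - a)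
  have e₄ := hE (x - a - b)
  have e₅ := hE (x - b - b)
  rw [sub_right_comm x b a] at e₂
  rw [sub_right_comm (x - a) b a] at e₄
  rw [sub_right_comm (x - b) b a, sub_right_comm x b a] at e₅
  rw [show x - 3 * a = x - a - a - a by ring, show x - 3 * b = x - b - b - b by ring]
  omega

theorem periodic_three_mul_of_tile (h01 : ∀ y, F y = 0 ∨ F y = 1)
    (hE : ∀ y, F y + F (y - a) + F (y - b) = 1) : Periodic F (3 * a) := by
  intro x
  have h3 := three_dvd_add_add_sub_three_mul hE (x + 3 * a)
  rw [add_sub_cancel_right] at h3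
  have := h01 x
  have := h01 (x + 3 * a)
  have := h01 (x + 3 * a - 3 * b)
  omega

theorem periodic_three_mul_gcd_of_tile (h01 : ∀ y, F y = 0 ∨ F y = 1)
    (hE : ∀ y, F y + F (y - a) + F (y - b) = 1) : Periodic F (3 * Int.gcd a b) := by
  have ha := periodic_three_mul_of_tile h01 hE
  have hb := periodic_three_mul_of_tile h01 (b := a) fun y => by rw [add_right_comm]; exact hE y
  rw [Int.gcd_eq_gcd_ab, show 3 * (a * a.gcdA b + b * a.gcdB b)
    = a.gcdA b * (3 * a) + a.gcdB b * (3 * b) by ring]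
  exact (ha.int_mul _).add_period (hb.int_mul _)

theorem not_periodic_left_of_tile (h01 : ∀ y, F y = 0 ∨ F y = 1)
    (hE : ∀ y, F y + F (y - a) + F (y - b) = 1) : ¬ Periodic F a := by
  intro h
  have e₀ := hE 0
  have e₁ := hE b
  rw [h.sub_eq, sub_self] at e₁
  rw [h.sub_eq] at e₀
  have := h01 0
  have := h01 (0 - b)
  omega

theorem not_periodic_sub_of_tile (h01 : ∀ y, F y = 0 ∨ F y = 1)
    (hE : ∀ y, F y + F (y - a) + F (y - b) = 1) : ¬ Periodic F (b - a) := by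
  intro h
  have hshift : ∀ y, F (y - b) = F (y - a) := fun y => by
    rw [← h (y - b), sub_add_sub_cancel]
  have e₀ := hE 0
  have e₁ := hE a
  rw [hshift] at e₀ e₁
  rw [sub_self] at e₁
  have := h01 0
  have := h01 a
  have := h01 (0 - a)
  omega

end TileEquation

section PadicVal

variable {p : ℕ} [Fact p.Prime]

theorem padicValInt_eq_of_dvd_of_not_mul_dvd {d x : ℤ} (hx : x ≠ 0) (hdx : d ∣ x)
    (h : ¬ (p : ℤ) * d ∣ x) : padicValInt p x = padicValInt p d := by
  obtain ⟨q, rfl⟩ := hdx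
  obtain ⟨hd, hq⟩ := mul_ne_zero_iff.1 hx
  have hpq : ¬ (p : ℤ) ∣ q := fun ⟨r, hr⟩ => h ⟨r, by rw [hr]; ring⟩
  rw [padicValInt.mul hd hq, padicValInt.eq_zero_of_not_dvd hpq, add_zero]

theorem padicValInt_pow_mul (j : ℕ) {n : ℤ} (hn : n ≠ 0) :
    padicValInt p ((p : ℤ) ^ j * n) = j + padicValInt p n := by
  rw [padicValInt.mul (pow_ne_zero _ (Nat.cast_ne_zero.2 (Fact.out : p.Prime).ne_zero)) hn,
    ← Nat.cast_pow, padicValInt.of_nat, padicValNat.prime_pow]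

theorem eq_and_not_dvd_sub_of_not_mul_dvd {j k : ℕ} {n m a b d : ℤ}
    (ha : a = (p : ℤ) ^ j * n) (hb : b = (p : ℤ) ^ k * m) (hn : ¬ (p : ℤ) ∣ n)
    (hm : ¬ (p : ℤ) ∣ m) (hab : a ≠ b) (hda : d ∣ a) (hdb : d ∣ b) (hpa : ¬ (p : ℤ) * d ∣ a)
    (hpb : ¬ (p : ℤ) * d ∣ b) (hpab : ¬ (p : ℤ) * d ∣ b - a) :
    j = k ∧ ¬ (p : ℤ) ∣ m - n := by
  have hn0 : n ≠ 0 := by rintro rfl; exact hn (dvd_zero _)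
  have hm0 : m ≠ 0 := by rintro rfl; exact hm (dvd_zero _)
  have hp0 : (p : ℤ) ≠ 0 := Nat.cast_ne_zero.2 (Fact.out : p.Prime).ne_zero
  have hva := padicValInt_eq_of_dvd_of_not_mul_dvd
    (ha ▸ mul_ne_zero (pow_ne_zero _ hp0) hn0) hda hpa
  have hvb := padicValInt_eq_of_dvd_of_not_mul_dvd
    (hb ▸ mul_ne_zero (pow_ne_zero _ hp0) hm0) hdb hpb
  rw [ha, padicValInt_pow_mul j hn0, padicValInt.eq_zero_of_not_dvd hn] at hva
  rw [hb, padicValInt_pow_mul k hm0, padicValInt.eq_zero_of_not_dvd hm] at hvb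
  obtain rfl : j = k := by omega
  refine ⟨rfl, fun hpmn => ?_⟩
  have hmn : m - n ≠ 0 := fun h => hab (by rw [ha, hb, sub_eq_zero.1 h])
  have hvab := padicValInt_eq_of_dvd_of_not_mul_dvd (sub_ne_zero.2 hab.symm) (dvd_sub hdb hda) hpab
  rw [show b - a = (p : ℤ) ^ j * (m - n) by rw [ha, hb]; ring, padicValInt_pow_mul j hmn] at hvab
  have : padicValInt p (m - n) ≠ 0 := by
    simp [padicValInt.eq_zero_iff, (Fact.out : p.Prime).ne_one, hmn, hpmn]
  omega

end PadicVal

theorem tilesZ_zero_mul_mul {q n m : ℤ} (hq : q ≠ 0) (hn : ¬ 3 ∣ n) (hm : ¬ 3 ∣ m)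
    (hmn : ¬ 3 ∣ m - n) : TilesZ {0, q * n, q * m} := by
  have hn0 : n ≠ 0 := by rintro rfl; exact hn (dvd_zero _)
  have hm0 : m ≠ 0 := by rintro rfl; exact hm (dvd_zero _)
  have hnm : q * n ≠ q * m := fun h =>
    hmn (by rw [mul_left_cancel₀ hq h, sub_self]; exact dvd_zero _)
  rw [tilesZ_zero_pair_iff (mul_ne_zero hq hn0) (mul_ne_zero hq hm0) hnm]
  refine ⟨{t | 3 ∣ t / q}, fun x => ?_⟩
  have hdiv : ∀ z, (x - q * z) / q = x / q - z := fun z => by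
    rw [sub_eq_add_neg, ← mul_neg, Int.add_mul_ediv_left _ _ hq, sub_eq_add_neg]
  simp only [Set.indicator_apply, Set.mem_ofPred_eq, hdiv, Pi.one_apply]
  split_ifs <;> omega

theorem stmt2 (j k : ℕ) (n m a b : ℤ)
    (ha : a = 3 ^ j * n) (hb : b = 3 ^ k * m)
    (hn : ¬ (3 ∣ n)) (hm : ¬ (3 ∣ m))
    (ha0 : a ≠ 0) (hb0 : b ≠ 0) (hab : a ≠ b) :
    TilesZ {0, a, b} ↔ (j = k ∧ ¬ ((3 : ℤ) ∣ (m - n))) := by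
  constructor
  · intro hT
    obtain ⟨T, hT⟩ := (tilesZ_zero_pair_iff ha0 hb0 hab).1 hT
    set F := T.indicator (1 : ℤ → ℤ)
    have h01 : ∀ y, F y = 0 ∨ F y = 1 := fun y => by by_cases hy : y ∈ T <;> simp [F, hy]
    have hT' : ∀ y, F y + F (y - b) + F (y - a) = 1 := fun y => by
      rw [add_right_comm]; exact hT y
    have hper := periodic_three_mul_gcd_of_tile h01 hT
    exact eq_and_not_dvd_sub_of_not_mul_dvd (p := 3) ha hb hn hm hab
      (Int.gcd_dvd_left a b) (Int.gcd_dvd_right a b)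
      (fun h => not_periodic_left_of_tile h01 hT (hper.of_dvd h))
      (fun h => not_periodic_left_of_tile h01 hT' (hper.of_dvd h))
      (fun h => not_periodic_sub_of_tile h01 hT (hper.of_dvd h))
  · rintro ⟨rfl, hmn⟩
    rw [ha, hb]
    exact tilesZ_zero_mul_mul (pow_ne_zero _ three_ne_zero) hn hm hmn
end

section
/- Let Ω₃ = [0,1] ∪ [a, a+1] ∪ [b, b+1] with a = 3^j(3r+1) and b = 3^j(3s+2) for integers j ≥ 0, r, s (so the intervals are disjoint). Then Λ = ℤ ∪ (ℤ + 1/3^{j+1}) ∪ (ℤ + 2/3^{j+1}) is a spectrum for Ω₃, i.e., {e^{2πiλx} : λ ∈ Λ} restricted to Ω₃ forms an orthogonal basis of L²(Ω₃). -/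
open MeasureTheory

/-- `Λ` is a spectrum for `Ω`: the exponentials `e^{2πiλx}`, `λ ∈ Λ`, restricted to `Ω`,
are mutually orthogonal and complete in `L²(Ω)`. -/
def IsSpectrum (Ω Λ : Set ℝ) : Prop :=
  (∀ l ∈ Λ, ∀ m ∈ Λ, l ≠ m →
      (∫ x in Ω, Complex.exp (2 * (Real.pi : ℂ) * Complex.I * ((l : ℂ) - (m : ℂ)) * (x : ℂ))) = 0) ∧
  (∀ f : ℝ → ℂ, MemLp f 2 (volume.restrict Ω) →
      (∀ l ∈ Λ,
        (∫ x in Ω, f x * Complex.exp (-(2 * (Real.pi : ℂ) * Complex.I * (l : ℂ) * (x : ℂ)))) = 0) →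
      f =ᵐ[volume.restrict Ω] 0)

/-!
Write `e(x) = exp(2πix)`, `ζ = e(1/3)` and `Ω = [0,1] ∪ [a,a+1] ∪ [b,b+1]`. Folding `Ω` onto
`(0,1]` turns `∫_Ω F` into `∫₀¹ F(t) + F(a+t) + F(b+t)`, and for `λ ∈ ℤ + d/3^(j+1)` the shape of
`a` and `b` gives `e(λa) = ζ^d`, `e(λb) = ζ^(2d)`.

Orthogonality: for `μ = l - m`, `∫_Ω e(μx) = (1 + e(μa) + e(μb)) ∫₀¹ e(μt)`. If `3 ∤ d` the first
factor is `1 + ζ^d + ζ^(2d) = 0`; otherwise `μ` is a nonzero integer and the second factor vanishes.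

Completeness: testing `f` against `e(-λx)`, `λ = n + k/3^(j+1)`, computes the `n`-th Fourier
coefficient on `(0,1]` of `(f(t) + ζ^(-k) f(a+t) + ζ^(-2k) f(b+t)) e(-kt/3^(j+1))`. By Parseval
these three combinations vanish, and inverting the `3 × 3` discrete Fourier transform gives
`f = 0` on each of the three intervals.
-/

open Set Complex
open scoped Real

noncomputable def expTwoPiI (x : ℝ) : ℂ := exp (2 * π * I * x)

lemma expTwoPiI_mul_eq (x y : ℝ) : expTwoPiI (x * y) = exp (2 * π * I * x * y) := by
  simp [expTwoPiI, mul_assoc]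

lemma expTwoPiI_neg_mul_eq (x y : ℝ) : expTwoPiI (-(x * y)) = exp (-(2 * π * I * x * y)) := by
  simp [expTwoPiI, mul_assoc]

lemma expTwoPiI_add (x y : ℝ) : expTwoPiI (x + y) = expTwoPiI x * expTwoPiI y := by
  simp only [expTwoPiI, ← exp_add, ofReal_add, mul_add]

lemma expTwoPiI_intCast_add (n : ℤ) (x : ℝ) : expTwoPiI (n + x) = expTwoPiI x := by
  rw [expTwoPiI_add, expTwoPiI, ofReal_intCast, mul_comm (2 * π * I : ℂ), exp_int_mul_two_pi_mul_I,
    one_mul]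

lemma norm_expTwoPiI (x : ℝ) : ‖expTwoPiI x‖ = 1 := by
  rw [expTwoPiI, show 2 * π * I * x = ((2 * π * x : ℝ) : ℂ) * I by push_cast; ring]
  exact norm_exp_ofReal_mul_I _

lemma expTwoPiI_ne_zero (x : ℝ) : expTwoPiI x ≠ 0 := exp_ne_zero _

@[fun_prop]
lemma continuous_expTwoPiI : Continuous expTwoPiI := by
  unfold expTwoPiI
  fun_prop

lemma IsPrimitiveRoot.one_add_zpow_add_zpow_mul_two_eq_zero {K : Type*} [Field K]
    {ζ : K} (hζ : IsPrimitiveRoot ζ 3) {d : ℤ} (hd : ¬ (3 : ℤ) ∣ d) :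
    1 + ζ ^ d + ζ ^ (d * 2) = 0 := by
  have hcop : d.gcd 3 = 1 :=
    Int.isCoprime_iff_gcd_eq_one.1 ((Int.prime_three.irreducible.coprime_iff_not_dvd).2 hd).symm
  have h := (hζ.zpow_of_gcd_eq_one d hcop).geom_sum_eq_zero (by norm_num)
  simpa [Finset.sum_range_succ, zpow_mul] using h

lemma IsPrimitiveRoot.eq_zero_of_dft_three_eq_zero {ω x y z : ℂ} (hω : IsPrimitiveRoot ω 3)
    (h : ∀ k < 3, x + ω ^ k * y + ω ^ (2 * k) * z = 0) : x = 0 ∧ y = 0 ∧ z = 0 := by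
  have h3 : ω ^ 3 = 1 := hω.pow_eq_one
  have hs : 1 + ω + ω ^ 2 = 0 := by
    simpa [Finset.sum_range_succ] using hω.geom_sum_eq_zero (by norm_num)
  have h0 : x + y + z = 0 := by simpa using h 0 (by norm_num)
  have h1 : x + ω * y + ω ^ 2 * z = 0 := by simpa using h 1 (by norm_num)
  have h2 : x + ω ^ 2 * y + ω ^ 4 * z = 0 := by simpa using h 2 (by norm_num)
  refine ⟨?_, ?_, ?_⟩
  · linear_combination (h0 + h1 + h2) / 3 - (y + z) / 3 * hs - z * ω / 3 * h3
  · linear_combination (h0 + ω ^ 2 * h1 + ω * h2) / 3 - (x + z) / 3 * hs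
      - (2 * y / 3 + (ω + ω ^ 2) * z / 3) * h3
  · linear_combination (h0 + ω * h1 + ω ^ 2 * h2) / 3 - (x + y) / 3 * hs
      - (ω * y / 3 + (2 + ω ^ 3) * z / 3) * h3

lemma isPrimitiveRoot_expTwoPiI_one_third : IsPrimitiveRoot (expTwoPiI (1 / 3)) 3 := by
  convert isPrimitiveRoot_exp 3 (by norm_num) using 1
  simp only [expTwoPiI]
  push_cast
  ring_nf

lemma expTwoPiI_intCast_add_div_three (n q : ℤ) :
    expTwoPiI (n + q / 3) = expTwoPiI (1 / 3) ^ q := by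
  rw [expTwoPiI_intCast_add, expTwoPiI, expTwoPiI, ← exp_int_mul]
  push_cast
  ring_nf

/-- `(n + d / 3^(j+1)) · 3^j (3r + e) = (n 3^j (3r + e) + d r) + d e / 3`. -/
lemma expTwoPiI_mul_three_pow_mul (j : ℕ) (n d r e : ℤ) :
    expTwoPiI ((n + d / 3 ^ (j + 1)) * (3 ^ j * (3 * r + e))) = expTwoPiI (1 / 3) ^ (d * e) := by
  rw [← expTwoPiI_intCast_add_div_three (n * 3 ^ j * (3 * r + e) + d * r)]
  congr 1
  push_cast
  field_simp
  ring

lemma expTwoPiI_neg_mul_three_pow_mul (j : ℕ) (n r : ℤ) (k e : ℕ) :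
    expTwoPiI (-((n + k / 3 ^ (j + 1)) * (3 ^ j * (3 * r + e)))) =
      (expTwoPiI (1 / 3))⁻¹ ^ (k * e) := by
  have h := expTwoPiI_mul_three_pow_mul j (-n) (-k) r e
  push_cast at h
  rw [neg_mul, zpow_neg, ← inv_zpow, show ((k : ℤ) * e) = ((k * e : ℕ) : ℤ) by push_cast; ring,
    zpow_natCast] at h
  rw [← h]
  congr 1
  ring

lemma exists_eq_add_div_three_pow_iff {j : ℕ} {l : ℝ} :
    (∃ z : ℤ, l = z ∨ l = z + 1 / 3 ^ (j + 1) ∨ l = z + 2 / 3 ^ (j + 1)) ↔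
      ∃ n : ℤ, ∃ k : ℕ, k < 3 ∧ l = n + k / 3 ^ (j + 1) := by
  constructor
  · rintro ⟨z, rfl | rfl | rfl⟩
    · exact ⟨z, 0, by norm_num, by simp⟩
    · exact ⟨z, 1, by norm_num, by simp⟩
    · exact ⟨z, 2, by norm_num, by simp⟩
  · rintro ⟨n, k, hk, rfl⟩
    refine ⟨n, ?_⟩
    interval_cases k <;> simp

lemma measurePreserving_const_add_Ioc_Icc (c : ℝ) :
    MeasurePreserving (c + ·) (volume.restrict (Ioc 0 1)) (volume.restrict (Icc c (c + 1))) := by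
  rw [← Measure.restrict_congr_set Ioc_ae_eq_Icc]
  simpa using (measurePreserving_add_left volume c).restrict_preimage
    (measurableSet_Ioc (a := c) (b := c + 1))

lemma setIntegral_Icc_eq_setIntegral_Ioc_const_add {E : Type*} [NormedAddCommGroup E]
    [NormedSpace ℝ E] (c : ℝ) (F : ℝ → E) :
    ∫ x in Icc c (c + 1), F x = ∫ t in Ioc 0 1, F (c + t) :=
  ((measurePreserving_const_add_Ioc_Icc c).integral_comp (measurableEmbedding_addLeft c) F).symm

lemma MeasureTheory.IntegrableOn.comp_const_add_Ioc {E : Type*} [NormedAddCommGroup E] {c : ℝ}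
    {F : ℝ → E} (hF : IntegrableOn F (Icc c (c + 1))) :
    IntegrableOn (fun t => F (c + t)) (Ioc 0 1) :=
  ((measurePreserving_const_add_Ioc_Icc c).integrable_comp_emb (measurableEmbedding_addLeft c)).2 hF

lemma MeasureTheory.MemLp.comp_const_add_Ioc {E : Type*} [NormedAddCommGroup E] {p : ENNReal}
    {c : ℝ} {f : ℝ → E} (hf : MemLp f p (volume.restrict (Icc c (c + 1)))) :
    MemLp (fun t => f (c + t)) p (volume.restrict (Ioc 0 1)) :=
  hf.comp_measurePreserving (measurePreserving_const_add_Ioc_Icc c)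

lemma ae_restrict_Icc_iff_const_add {c : ℝ} {p : ℝ → Prop} :
    (∀ᵐ x ∂volume.restrict (Icc c (c + 1)), p x) ↔ ∀ᵐ t ∂volume.restrict (Ioc 0 1), p (c + t) := by
  rw [← (measurePreserving_const_add_Ioc_Icc c).map_eq, (measurableEmbedding_addLeft c).ae_map_iff]

lemma ae_eq_zero_of_fourierCoeffOn_eq_zero {a b : ℝ} (hab : a < b) {f : ℝ → ℂ}
    (hf : MemLp f 2 (volume.restrict (Ioc a b))) (h : ∀ n, fourierCoeffOn hab f n = 0) :
    f =ᵐ[volume.restrict (Ioc a b)] 0 := by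
  have hsum := hasSum_sq_fourierCoeffOn hab hf
  simp only [h, norm_zero, ne_eq, OfNat.ofNat_ne_zero, not_false_eq_true, zero_pow] at hsum
  have hnorm : ∫ x in a..b, ‖f x‖ ^ 2 = 0 := by
    simpa [(sub_pos.2 hab).ne'] using hsum.unique hasSum_zero
  rw [intervalIntegral.integral_of_le hab.le,
    integral_eq_zero_iff_of_nonneg (fun _ => by positivity) (hf.integrable_norm_pow two_ne_zero)]
    at hnorm
  filter_upwards [hnorm] with x hx
  simpa using hx

lemma ae_eq_zero_of_setIntegral_mul_expTwoPiI_eq_zero {H : ℝ → ℂ}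
    (hH : MemLp H 2 (volume.restrict (Ioc 0 1))) (θ : ℝ)
    (h : ∀ n : ℤ, ∫ t in Ioc 0 1, H t * expTwoPiI (-((n + θ) * t)) = 0) :
    H =ᵐ[volume.restrict (Ioc 0 1)] 0 := by
  have hG : MemLp (fun t => H t * expTwoPiI (-(θ * t))) 2 (volume.restrict (Ioc 0 1)) :=
    hH.of_le (hH.aestronglyMeasurable.mul (by fun_prop : Continuous _).aestronglyMeasurable)
      (ae_of_all _ fun t => by simp [norm_expTwoPiI])
  have hG0 := ae_eq_zero_of_fourierCoeffOn_eq_zero zero_lt_one hG fun n => by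
    rw [fourierCoeffOn_eq_integral, intervalIntegral.integral_of_le zero_le_one, ← h n]
    simp only [sub_zero, div_one, one_smul, smul_eq_mul, fourier_coe_apply, expTwoPiI]
    congr 1
    funext t
    rw [mul_left_comm, ← exp_add]
    push_cast
    ring_nf
  filter_upwards [hG0] with t ht
  exact (mul_eq_zero.1 ht).resolve_right (expTwoPiI_ne_zero _)

lemma setIntegral_Ioc_expTwoPiI_intCast_mul {n : ℤ} (hn : n ≠ 0) :
    ∫ t in Ioc 0 1, expTwoPiI (n * t) = 0 := by
  have hc : 2 * π * I * n ≠ 0 := by simp [hn, Real.pi_ne_zero, I_ne_zero]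
  simp only [expTwoPiI_mul_eq, ofReal_intCast, ← intervalIntegral.integral_of_le zero_le_one]
  rw [integral_exp_mul_complex hc]
  simp [mul_comm _ (n : ℂ), exp_int_mul_two_pi_mul_I]

section ThreeIntervals

variable {j : ℕ} {r s : ℤ} {a b : ℝ}

lemma setIntegral_union_three_Icc {E : Type*} [NormedAddCommGroup E] [NormedSpace ℝ E]
    (hd1 : Disjoint (Icc 0 1) (Icc a (a + 1))) (hd2 : Disjoint (Icc 0 1) (Icc b (b + 1)))
    (hd3 : Disjoint (Icc a (a + 1)) (Icc b (b + 1))) {F : ℝ → E}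
    (hF : IntegrableOn F (Icc 0 1 ∪ Icc a (a + 1) ∪ Icc b (b + 1))) :
    ∫ x in Icc 0 1 ∪ Icc a (a + 1) ∪ Icc b (b + 1), F x =
      ∫ t in Ioc 0 1, (F t + F (a + t) + F (b + t)) := by
  have hF0 : IntegrableOn F (Icc 0 1) := hF.mono_set (by intro x; aesop)
  have hFa : IntegrableOn F (Icc a (a + 1)) := hF.mono_set (by intro x; aesop)
  have hFb : IntegrableOn F (Icc b (b + 1)) := hF.mono_set (by intro x; aesop)
  have h0 : ∫ x in Icc 0 1, F x = ∫ t in Ioc 0 1, F t := by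
    simpa using setIntegral_Icc_eq_setIntegral_Ioc_const_add 0 F
  rw [setIntegral_union (hd2.union_left hd3) measurableSet_Icc (hF0.union hFa) hFb,
    setIntegral_union hd1 measurableSet_Icc hF0 hFa, h0,
    setIntegral_Icc_eq_setIntegral_Ioc_const_add a, setIntegral_Icc_eq_setIntegral_Ioc_const_add b,
    ← integral_add (hF0.mono_set Ioc_subset_Icc_self) hFa.comp_const_add_Ioc]
  exact (integral_add ((hF0.mono_set Ioc_subset_Icc_self).add hFa.comp_const_add_Ioc)
    hFb.comp_const_add_Ioc).symm

lemma setIntegral_expTwoPiI_union_three_Icc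
    (hd1 : Disjoint (Icc 0 1) (Icc a (a + 1))) (hd2 : Disjoint (Icc 0 1) (Icc b (b + 1)))
    (hd3 : Disjoint (Icc a (a + 1)) (Icc b (b + 1))) (μ : ℝ) :
    ∫ x in Icc 0 1 ∪ Icc a (a + 1) ∪ Icc b (b + 1), expTwoPiI (μ * x) =
      (1 + expTwoPiI (μ * a) + expTwoPiI (μ * b)) * ∫ t in Ioc 0 1, expTwoPiI (μ * t) := by
  have hc : Continuous fun x => expTwoPiI (μ * x) := by fun_prop
  rw [setIntegral_union_three_Icc hd1 hd2 hd3
    ((hc.integrableOn_Icc.union hc.integrableOn_Icc).union hc.integrableOn_Icc),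
    ← integral_const_mul]
  congr 1
  funext t
  simp only [mul_add, expTwoPiI_add]
  ring

lemma setIntegral_mul_expTwoPiI_union_three_Icc
    (hd1 : Disjoint (Icc 0 1) (Icc a (a + 1))) (hd2 : Disjoint (Icc 0 1) (Icc b (b + 1)))
    (hd3 : Disjoint (Icc a (a + 1)) (Icc b (b + 1))) {f : ℝ → ℂ}
    (hf : IntegrableOn f (Icc 0 1 ∪ Icc a (a + 1) ∪ Icc b (b + 1))) (l : ℝ) :
    ∫ x in Icc 0 1 ∪ Icc a (a + 1) ∪ Icc b (b + 1), f x * expTwoPiI (-(l * x)) =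
      ∫ t in Ioc 0 1, (f t + expTwoPiI (-(l * a)) * f (a + t) + expTwoPiI (-(l * b)) * f (b + t)) *
        expTwoPiI (-(l * t)) := by
  rw [setIntegral_union_three_Icc hd1 hd2 hd3 (hf.mul_bdd
    (by fun_prop : Continuous _).aestronglyMeasurable (ae_of_all _ fun x => (norm_expTwoPiI _).le))]
  congr 1
  funext t
  simp only [mul_add, neg_add, expTwoPiI_add]
  ring

lemma setIntegral_expTwoPiI_three_Icc_eq_zero
    (ha : a = 3 ^ j * (3 * (r : ℝ) + 1)) (hb : b = 3 ^ j * (3 * (s : ℝ) + 2))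
    (hd1 : Disjoint (Icc 0 1) (Icc a (a + 1))) (hd2 : Disjoint (Icc 0 1) (Icc b (b + 1)))
    (hd3 : Disjoint (Icc a (a + 1)) (Icc b (b + 1)))
    {u d : ℤ} (hd : d.natAbs < 3) (hμ : (u : ℝ) + d / 3 ^ (j + 1) ≠ 0) :
    ∫ x in Icc 0 1 ∪ Icc a (a + 1) ∪ Icc b (b + 1), expTwoPiI ((u + d / 3 ^ (j + 1)) * x) = 0 := by
  rw [setIntegral_expTwoPiI_union_three_Icc hd1 hd2 hd3]
  rcases eq_or_ne d 0 with rfl | hd0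
  · simp only [Int.cast_zero, zero_div, add_zero] at hμ ⊢
    rw [setIntegral_Ioc_expTwoPiI_intCast_mul (by exact_mod_cast hμ), mul_zero]
  · have hea : expTwoPiI ((u + d / 3 ^ (j + 1)) * a) = expTwoPiI (1 / 3) ^ d := by
      simpa [ha] using expTwoPiI_mul_three_pow_mul j u d r 1
    have heb : expTwoPiI ((u + d / 3 ^ (j + 1)) * b) = expTwoPiI (1 / 3) ^ (d * 2) := by
      simpa [hb] using expTwoPiI_mul_three_pow_mul j u d s 2
    rw [hea, heb, isPrimitiveRoot_expTwoPiI_one_third.one_add_zpow_add_zpow_mul_two_eq_zero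
      (by omega), zero_mul]

lemma ae_eq_zero_of_setIntegral_mul_expTwoPiI_three_Icc_eq_zero
    (ha : a = 3 ^ j * (3 * (r : ℝ) + 1)) (hb : b = 3 ^ j * (3 * (s : ℝ) + 2))
    (hd1 : Disjoint (Icc 0 1) (Icc a (a + 1))) (hd2 : Disjoint (Icc 0 1) (Icc b (b + 1)))
    (hd3 : Disjoint (Icc a (a + 1)) (Icc b (b + 1))) {f : ℝ → ℂ}
    (hf : MemLp f 2 (volume.restrict (Icc 0 1 ∪ Icc a (a + 1) ∪ Icc b (b + 1))))
    (h : ∀ n : ℤ, ∀ k : ℕ, k < 3 → ∫ x in Icc 0 1 ∪ Icc a (a + 1) ∪ Icc b (b + 1),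
      f x * expTwoPiI (-((n + k / 3 ^ (j + 1)) * x)) = 0) :
    f =ᵐ[volume.restrict (Icc 0 1 ∪ Icc a (a + 1) ∪ Icc b (b + 1))] 0 := by
  set Ω := Icc (0 : ℝ) 1 ∪ Icc a (a + 1) ∪ Icc b (b + 1)
  set ω := (expTwoPiI (1 / 3))⁻¹
  have : IsFiniteMeasure (volume.restrict Ω) := isFiniteMeasure_restrict.2
    ((isCompact_Icc.union isCompact_Icc).union isCompact_Icc).measure_ne_top
  have hmem : ∀ c, Icc c (c + 1) ⊆ Ω → MemLp (fun t => f (c + t)) 2 (volume.restrict (Ioc 0 1)) :=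
    fun c hc => (hf.mono_measure (Measure.restrict_mono hc le_rfl)).comp_const_add_Ioc
  have hmem0 : MemLp f 2 (volume.restrict (Ioc 0 1)) :=
    hf.mono_measure (Measure.restrict_mono (Ioc_subset_Icc_self.trans (by intro x; aesop)) le_rfl)
  have hdft : ∀ k < 3, ∀ᵐ t ∂volume.restrict (Ioc 0 1),
      f t + ω ^ k * f (a + t) + ω ^ (2 * k) * f (b + t) = 0 := by
    intro k hk
    refine ae_eq_zero_of_setIntegral_mul_expTwoPiI_eq_zero
      ((hmem0.add ((hmem a (by intro x; aesop)).const_mul _)).add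
        ((hmem b (by intro x; aesop)).const_mul _)) (k / 3 ^ (j + 1)) fun n => ?_
    have hea : expTwoPiI (-((n + k / 3 ^ (j + 1)) * a)) = ω ^ k := by
      simpa only [ha, Nat.cast_one, mul_one] using expTwoPiI_neg_mul_three_pow_mul j n r k 1
    have heb : expTwoPiI (-((n + k / 3 ^ (j + 1)) * b)) = ω ^ (2 * k) := by
      rw [hb, mul_comm 2 k]
      exact_mod_cast expTwoPiI_neg_mul_three_pow_mul j n s k 2
    rw [← h n k hk,
      setIntegral_mul_expTwoPiI_union_three_Icc hd1 hd2 hd3 (hf.integrable one_le_two), hea, heb]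
  have hzero : ∀ᵐ t ∂volume.restrict (Ioc 0 1), f t = 0 ∧ f (a + t) = 0 ∧ f (b + t) = 0 := by
    filter_upwards [hdft 0 (by norm_num), hdft 1 (by norm_num), hdft 2 (by norm_num)]
      with t h0 h1 h2
    exact isPrimitiveRoot_expTwoPiI_one_third.inv.eq_zero_of_dft_three_eq_zero fun k hk => by
      interval_cases k <;> assumption
  refine (ae_restrict_union_iff _ _ _).2 ⟨(ae_restrict_union_iff _ _ _).2 ⟨?_, ?_⟩, ?_⟩
  · simpa using ae_restrict_Icc_iff_const_add (c := 0) |>.2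
      (hzero.mono fun t ht => by simpa using ht.1)
  · exact ae_restrict_Icc_iff_const_add.2 (hzero.mono fun t ht => ht.2.1)
  · exact ae_restrict_Icc_iff_const_add.2 (hzero.mono fun t ht => ht.2.2)

end ThreeIntervals

theorem stmt3 (j : ℕ) (r s : ℤ) (a b : ℝ)
    (ha : a = 3 ^ j * (3 * (r : ℝ) + 1)) (hb : b = 3 ^ j * (3 * (s : ℝ) + 2))
    (hd1 : Disjoint (Set.Icc (0 : ℝ) 1) (Set.Icc a (a + 1)))
    (hd2 : Disjoint (Set.Icc (0 : ℝ) 1) (Set.Icc b (b + 1)))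
    (hd3 : Disjoint (Set.Icc a (a + 1)) (Set.Icc b (b + 1))) :
    IsSpectrum (Set.Icc 0 1 ∪ Set.Icc a (a + 1) ∪ Set.Icc b (b + 1))
      {l : ℝ | ∃ z : ℤ, l = z ∨ l = z + 1 / 3 ^ (j + 1) ∨ l = z + 2 / 3 ^ (j + 1)} := by
  refine ⟨fun l hl m hm hlm => ?_, fun f hf hf0 => ?_⟩
  · obtain ⟨n₁, k₁, hk₁, rfl⟩ := exists_eq_add_div_three_pow_iff.1 hl
    obtain ⟨n₂, k₂, hk₂, rfl⟩ := exists_eq_add_div_three_pow_iff.1 hm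
    have hsub : (n₁ + k₁ / 3 ^ (j + 1) : ℝ) - (n₂ + k₂ / 3 ^ (j + 1)) =
        ((n₁ - n₂ : ℤ) : ℝ) + ((k₁ - k₂ : ℤ) : ℝ) / 3 ^ (j + 1) := by
      push_cast
      ring
    simp_rw [← ofReal_sub, ← expTwoPiI_mul_eq, hsub]
    exact setIntegral_expTwoPiI_three_Icc_eq_zero ha hb hd1 hd2 hd3 (by omega)
      (hsub ▸ sub_ne_zero.2 hlm)
  · refine ae_eq_zero_of_setIntegral_mul_expTwoPiI_three_Icc_eq_zero ha hb hd1 hd2 hd3 hf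
      fun n k hk => ?_
    simpa only [expTwoPiI_neg_mul_eq] using
      hf0 _ (exists_eq_add_div_three_pow_iff.2 ⟨n, k, hk, rfl⟩)
end

section
/- Let ω = e^{2πi/3}, a, b real, Z¹ = {λ : e^{2πiλa} = ω, e^{2πiλb} = ω²}, Z² = {λ : e^{2πiλa} = ω², e^{2πiλb} = ω}. Suppose Z¹ ∪ Z² is nonempty and has a smallest positive element α₀, and suppose α₀ ∈ Z¹. Then Z¹ = α₀ + 3α₀ℤ and Z² = 2α₀ + 3α₀ℤ. -/
noncomputable def Efn (l c : ℝ) : ℂ :=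
  Complex.exp (2 * (Real.pi : ℂ) * Complex.I * (l : ℂ) * (c : ℂ))

lemma Efn_add (l m c : ℝ) : Efn (l + m) c = Efn l c * Efn m c := by
  unfold Efn
  rw [← Complex.exp_add]
  congr 1
  push_cast
  ring

lemma Efn_zpow (k : ℤ) (l c : ℝ) : Efn (l * (k : ℝ)) c = (Efn l c) ^ k := by
  unfold Efn
  rw [← Complex.exp_int_mul]
  congr 1
  push_cast
  ring

lemma Efn_mul_neg (l c : ℝ) : Efn l c * Efn (-l) c = 1 := by
  rw [← Efn_add]
  simp [Efn]

theorem stmt6 (a b : ℝ) (ω : ℂ) (hω : ω = Complex.exp (2 * (Real.pi : ℂ) * Complex.I / 3))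
    (Z1 Z2 : Set ℝ)
    (hZ1 : Z1 = {l : ℝ | Complex.exp (2 * (Real.pi : ℂ) * Complex.I * (l : ℂ) * (a : ℂ)) = ω ∧
        Complex.exp (2 * (Real.pi : ℂ) * Complex.I * (l : ℂ) * (b : ℂ)) = ω ^ 2})
    (hZ2 : Z2 = {l : ℝ | Complex.exp (2 * (Real.pi : ℂ) * Complex.I * (l : ℂ) * (a : ℂ)) = ω ^ 2 ∧
        Complex.exp (2 * (Real.pi : ℂ) * Complex.I * (l : ℂ) * (b : ℂ)) = ω})
    (α₀ : ℝ) (hα₀ : α₀ ∈ Z1) (hpos : 0 < α₀)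
    (hmin : ∀ x ∈ Z1 ∪ Z2, 0 < x → α₀ ≤ x) :
    Z1 = {x : ℝ | ∃ k : ℤ, x = α₀ + 3 * α₀ * k} ∧
      Z2 = {x : ℝ | ∃ k : ℤ, x = 2 * α₀ + 3 * α₀ * k} := by
  subst hZ1 hZ2
  -- basic facts about ω
  have hprim : IsPrimitiveRoot ω 3 := by
    rw [hω]
    have h := Complex.isPrimitiveRoot_exp 3 (by norm_num)
    simpa using h
  have hω3 : ω ^ 3 = 1 := hprim.pow_eq_one
  have hω1 : ω ≠ 1 := hprim.ne_one (by norm_num)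
  have hω2 : ω ^ 2 ≠ 1 := hprim.pow_ne_one_of_pos_of_lt (by norm_num) (by norm_num)
  have hω0 : ω ≠ 0 := by rw [hω]; exact Complex.exp_ne_zero _
  have hω20 : ω ^ 2 ≠ 0 := pow_ne_zero _ hω0
  -- membership of α₀
  have ha1 : Efn α₀ a = ω := hα₀.1
  have hb1 : Efn α₀ b = ω ^ 2 := hα₀.2
  -- negatives
  have hnega : Efn (-α₀) a = ω ^ 2 := by
    have h := Efn_mul_neg α₀ a
    rw [ha1] at h
    apply mul_left_cancel₀ hω0
    rw [h]; linear_combination -hω3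
  have hnegb : Efn (-α₀) b = ω := by
    have h := Efn_mul_neg α₀ b
    rw [hb1] at h
    apply mul_left_cancel₀ hω20
    rw [h]; linear_combination -hω3
  -- doubles
  have h2a : Efn (2 * α₀) a = ω ^ 2 := by
    rw [show (2:ℝ) * α₀ = α₀ + α₀ by ring, Efn_add, ha1]; ring
  have h2b : Efn (2 * α₀) b = ω := by
    rw [show (2:ℝ) * α₀ = α₀ + α₀ by ring, Efn_add, hb1]
    linear_combination ω * hω3
  have hneg2a : Efn (-(2 * α₀)) a = ω := by
    have h := Efn_mul_neg (2 * α₀) a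
    rw [h2a] at h
    apply mul_left_cancel₀ hω20
    rw [h]; linear_combination -hω3
  have hneg2b : Efn (-(2 * α₀)) b = ω ^ 2 := by
    have h := Efn_mul_neg (2 * α₀) b
    rw [h2b] at h
    apply mul_left_cancel₀ hω0
    rw [h]; linear_combination -hω3
  -- triples
  have h3a : Efn (3 * α₀) a = 1 := by
    rw [show (3:ℝ) * α₀ = α₀ + 2 * α₀ by ring, Efn_add, ha1, h2a]
    linear_combination hω3
  have h3b : Efn (3 * α₀) b = 1 := by
    rw [show (3:ℝ) * α₀ = α₀ + 2 * α₀ by ring, Efn_add, hb1, h2b]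
    linear_combination hω3
  -- no element of Z0 strictly between 0 and 3α₀
  have hgap : ∀ μ : ℝ, Efn μ a = 1 → Efn μ b = 1 → 0 < μ → μ < 3 * α₀ → False := by
    intro μ hma hmb hp hlt
    have hna : Efn (-μ) a = 1 := by
      have h := Efn_mul_neg μ a; rw [hma, one_mul] at h; exact h
    have hnb : Efn (-μ) b = 1 := by
      have h := Efn_mul_neg μ b; rw [hmb, one_mul] at h; exact h
    rcases lt_trichotomy μ α₀ with h | h | h
    · have e1 : Efn (α₀ - μ) a = ω := by
        rw [show α₀ - μ = α₀ + (-μ) by ring, Efn_add, ha1, hna, mul_one]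
      have e2 : Efn (α₀ - μ) b = ω ^ 2 := by
        rw [show α₀ - μ = α₀ + (-μ) by ring, Efn_add, hb1, hnb, mul_one]
      have := hmin (α₀ - μ) (Set.mem_union_left _ ⟨e1, e2⟩) (by linarith)
      linarith
    · rw [h, ha1] at hma
      exact hω1 hma
    · rcases lt_trichotomy μ (2 * α₀) with h2 | h2 | h2
      · have e1 : Efn (μ - α₀) a = ω ^ 2 := by
          rw [show μ - α₀ = μ + (-α₀) by ring, Efn_add, hma, hnega, one_mul]
        have e2 : Efn (μ - α₀) b = ω := by
          rw [show μ - α₀ = μ + (-α₀) by ring, Efn_add, hmb, hnegb, one_mul]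
        have := hmin (μ - α₀) (Set.mem_union_right _ ⟨e1, e2⟩) (by linarith)
        linarith
      · rw [h2, h2a] at hma
        exact hω2 hma
      · have e1 : Efn (μ - 2 * α₀) a = ω := by
          rw [show μ - 2 * α₀ = μ + (-(2 * α₀)) by ring, Efn_add, hma, hneg2a, one_mul]
        have e2 : Efn (μ - 2 * α₀) b = ω ^ 2 := by
          rw [show μ - 2 * α₀ = μ + (-(2 * α₀)) by ring, Efn_add, hmb, hneg2b, one_mul]
        have := hmin (μ - 2 * α₀) (Set.mem_union_left _ ⟨e1, e2⟩) (by linarith)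
        linarith
  -- Z0 = 3α₀ℤ
  have hZ0 : ∀ μ : ℝ, Efn μ a = 1 → Efn μ b = 1 → ∃ k : ℤ, μ = 3 * α₀ * k := by
    intro μ hma hmb
    have h3pos : (0:ℝ) < 3 * α₀ := by linarith
    set q : ℤ := ⌊μ / (3 * α₀)⌋ with hq
    have h1 : (q : ℝ) * (3 * α₀) ≤ μ := by
      have := Int.floor_le (μ / (3 * α₀))
      rw [← le_div_iff₀ h3pos]
      exact this
    have h2 : μ < ((q : ℝ) + 1) * (3 * α₀) := by
      have := Int.lt_floor_add_one (μ / (3 * α₀))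
      rw [← div_lt_iff₀ h3pos]
      exact this
    have hmul : ∀ c : ℝ, Efn (3 * α₀) c = 1 → Efn (3 * α₀ * ((-q : ℤ) : ℝ)) c = 1 := by
      intro c hc
      rw [Efn_zpow, hc, one_zpow]
    have hra : Efn (μ - 3 * α₀ * q) a = 1 := by
      rw [show μ - 3 * α₀ * (q : ℝ) = μ + 3 * α₀ * ((-q : ℤ) : ℝ) by push_cast; ring,
        Efn_add, hma, hmul a h3a, one_mul]
    have hrb : Efn (μ - 3 * α₀ * q) b = 1 := by
      rw [show μ - 3 * α₀ * (q : ℝ) = μ + 3 * α₀ * ((-q : ℤ) : ℝ) by push_cast; ring,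
        Efn_add, hmb, hmul b h3b, one_mul]
    rcases eq_or_lt_of_le (show (0:ℝ) ≤ μ - 3 * α₀ * q by linarith) with heq | hlt
    · exact ⟨q, by linarith⟩
    · exact absurd (hgap _ hra hrb hlt (by linarith)) not_false
  constructor
  · ext x
    simp only [Set.mem_setOf_eq]
    constructor
    · rintro ⟨hxa, hxb⟩
      have hxa' : Efn x a = ω := hxa
      have hxb' : Efn x b = ω ^ 2 := hxb
      have e1 : Efn (x - α₀) a = 1 := by
        rw [show x - α₀ = x + (-α₀) by ring, Efn_add, hxa', hnega]
        linear_combination hω3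
      have e2 : Efn (x - α₀) b = 1 := by
        rw [show x - α₀ = x + (-α₀) by ring, Efn_add, hxb', hnegb]
        linear_combination hω3
      obtain ⟨k, hk⟩ := hZ0 _ e1 e2
      exact ⟨k, by linarith⟩
    · rintro ⟨k, hk⟩
      subst hk
      have hk1 : Efn (3 * α₀ * (k : ℝ)) a = 1 := by rw [Efn_zpow, h3a, one_zpow]
      have hk2 : Efn (3 * α₀ * (k : ℝ)) b = 1 := by rw [Efn_zpow, h3b, one_zpow]
      constructor
      · show Efn (α₀ + 3 * α₀ * (k : ℝ)) a = ω
        rw [Efn_add, ha1, hk1, mul_one]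
      · show Efn (α₀ + 3 * α₀ * (k : ℝ)) b = ω ^ 2
        rw [Efn_add, hb1, hk2, mul_one]
  · ext x
    simp only [Set.mem_setOf_eq]
    constructor
    · rintro ⟨hxa, hxb⟩
      have hxa' : Efn x a = ω ^ 2 := hxa
      have hxb' : Efn x b = ω := hxb
      have e1 : Efn (x - 2 * α₀) a = 1 := by
        rw [show x - 2 * α₀ = x + (-(2 * α₀)) by ring, Efn_add, hxa', hneg2a]
        linear_combination hω3
      have e2 : Efn (x - 2 * α₀) b = 1 := by
        rw [show x - 2 * α₀ = x + (-(2 * α₀)) by ring, Efn_add, hxb', hneg2b]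
        linear_combination hω3
      obtain ⟨k, hk⟩ := hZ0 _ e1 e2
      exact ⟨k, by linarith⟩
    · rintro ⟨k, hk⟩
      subst hk
      have hk1 : Efn (3 * α₀ * (k : ℝ)) a = 1 := by rw [Efn_zpow, h3a, one_zpow]
      have hk2 : Efn (3 * α₀ * (k : ℝ)) b = 1 := by rw [Efn_zpow, h3b, one_zpow]
      constructor
      · show Efn (2 * α₀ + 3 * α₀ * (k : ℝ)) a = ω ^ 2
        rw [Efn_add, h2a, hk1, mul_one]
      · show Efn (2 * α₀ + 3 * α₀ * (k : ℝ)) b = ω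
        rw [Efn_add, h2b, hk2, mul_one]
end

section
/- Let ζ₁, ..., ζ_{2n} be complex numbers satisfying ζ₁^l − ζ₂^l + ζ₃^l − ⋯ + ζ_{2n−1}^l − ζ_{2n}^l = 0 for all l = 0, 1, ..., 2n−1. Then there exist indices i ≠ j with i + j odd such that ζ_i = ζ_j. -/
theorem stmt7 (n : ℕ) (hn : 0 < n) (ζ : Fin (2 * n) → ℂ)
    (h : ∀ l : ℕ, l < 2 * n → ∑ i : Fin (2 * n), (-1 : ℂ) ^ (i : ℕ) * ζ i ^ l = 0) :
    ∃ i j : Fin (2 * n), i ≠ j ∧ Odd ((i : ℕ) + (j : ℕ)) ∧ ζ i = ζ j := by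
  by_contra hc
  push_neg at hc
  set i0 : Fin (2 * n) := ⟨0, by omega⟩ with hi0
  set s₀ := ζ i0 with hs
  set S : Finset ℂ := Finset.image ζ Finset.univ with hS
  set f : Polynomial ℂ := ∏ t ∈ S.erase s₀, (Polynomial.X - Polynomial.C t) with hf
  have hs0S : s₀ ∈ S := Finset.mem_image_of_mem ζ (Finset.mem_univ i0)
  have hdeg : f.natDegree < 2 * n := by
    have h1 : f.natDegree = (S.erase s₀).card := by
      rw [hf, Polynomial.natDegree_prod_of_monic _ _ (fun t _ => Polynomial.monic_X_sub_C t)]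
      simp
    have h3 : S.card ≤ 2 * n := by
      calc S.card ≤ Finset.univ.card := Finset.card_image_le
        _ = 2 * n := by simp
    have := Finset.card_erase_of_mem hs0S
    omega
  have key : ∑ i : Fin (2 * n), (-1 : ℂ) ^ (i : ℕ) * f.eval (ζ i) = 0 := by
    have heval : ∀ z : ℂ, f.eval z = ∑ l ∈ Finset.range (2 * n), f.coeff l * z ^ l :=
      fun z => Polynomial.eval_eq_sum_range' hdeg z
    calc ∑ i : Fin (2 * n), (-1 : ℂ) ^ (i : ℕ) * f.eval (ζ i)
        = ∑ i : Fin (2 * n), ∑ l ∈ Finset.range (2 * n),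
            f.coeff l * ((-1 : ℂ) ^ (i : ℕ) * ζ i ^ l) := by
          refine Finset.sum_congr rfl fun i _ => ?_
          rw [heval, Finset.mul_sum]
          exact Finset.sum_congr rfl fun l _ => by ring
      _ = ∑ l ∈ Finset.range (2 * n), f.coeff l *
            ∑ i : Fin (2 * n), (-1 : ℂ) ^ (i : ℕ) * ζ i ^ l := by
          rw [Finset.sum_comm]
          exact Finset.sum_congr rfl fun l _ => (Finset.mul_sum _ _ _).symm
      _ = 0 := Finset.sum_eq_zero fun l hl => by
          rw [h l (Finset.mem_range.mp hl), mul_zero]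
  have hzero : ∀ i, ζ i ≠ s₀ → f.eval (ζ i) = 0 := by
    intro i hi
    rw [hf, Polynomial.eval_prod]
    refine Finset.prod_eq_zero (Finset.mem_erase.mpr
      ⟨hi, Finset.mem_image_of_mem ζ (Finset.mem_univ i)⟩) ?_
    simp
  have heven : ∀ i : Fin (2 * n), ζ i = s₀ → Even (i : ℕ) := by
    intro i hi
    by_contra hodd
    rw [Nat.not_even_iff_odd] at hodd
    have hne : i ≠ i0 := by
      intro he
      rw [he] at hodd
      simp [hi0] at hodd
    exact hc i i0 hne (by simpa [hi0] using hodd) hi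
  have hne0 : f.eval s₀ ≠ 0 := by
    rw [hf, Polynomial.eval_prod]
    refine Finset.prod_ne_zero_iff.mpr fun t ht => ?_
    have := (Finset.mem_erase.mp ht).1
    simp only [Polynomial.eval_sub, Polynomial.eval_X, Polynomial.eval_C]
    exact sub_ne_zero.mpr (Ne.symm this)
  set T := Finset.univ.filter (fun i : Fin (2 * n) => ζ i = s₀) with hT
  have hsplit : ∑ i : Fin (2 * n), (-1 : ℂ) ^ (i : ℕ) * f.eval (ζ i)
      = (T.card : ℂ) * f.eval s₀ := by
    rw [← Finset.sum_filter_add_sum_filter_not Finset.univ (fun i => ζ i = s₀)]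
    have hz : ∑ i ∈ Finset.univ.filter (fun i : Fin (2 * n) => ¬ ζ i = s₀),
        (-1 : ℂ) ^ (i : ℕ) * f.eval (ζ i) = 0 :=
      Finset.sum_eq_zero fun i hi => by
        rw [hzero i (Finset.mem_filter.mp hi).2, mul_zero]
    rw [hz, add_zero]
    rw [Finset.sum_congr rfl (fun i hi => by
      have h1 := (Finset.mem_filter.mp hi).2
      rw [h1, Even.neg_one_pow (heven i h1), one_mul])]
    rw [Finset.sum_const, nsmul_eq_mul]
  have hTne : T.Nonempty := ⟨i0, Finset.mem_filter.mpr ⟨Finset.mem_univ _, rfl⟩⟩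
  rw [hsplit] at key
  have : (T.card : ℂ) ≠ 0 :=
    Nat.cast_ne_zero.mpr (Finset.card_pos.mpr hTne).ne'
  exact (mul_ne_zero this hne0) key
end

section
/- Let ζ₁, ..., ζ_{2n} be complex numbers satisfying ζ₁^l − ζ₂^l + ⋯ + ζ_{2n−1}^l − ζ_{2n}^l = 0 for l = 0, 1, ..., 2n−1. Then there is a bijection σ from odd indices {1,3,...,2n−1} to even indices {2,4,...,2n} with ζ_i = ζ_{σ(i)} for all odd i; consequently the alternating power sum ζ₁^k − ζ₂^k + ⋯ − ζ_{2n}^k vanishes for every integer k. -/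
/-!
The hypotheses say that the signed weights `(-1)^i` annihilate every polynomial of degree
`< 2n` evaluated at the `ζ i`. Evaluating against the Lagrange basis polynomial of a value `z`
over the (at most `2n`) distinct values shows that, for every `z`, as many even as odd indices
carry the value `z`. Matching these fibres gives the permutation, and the permutation pairs off
the terms of every alternating power sum.
-/

open Finset Polynomial

section Moments

variable {ι K : Type*} [Fintype ι] [Field K]

theorem sum_mul_eval_eq_zero_of_moments {w x : ι → K}
    (h : ∀ l < Fintype.card ι, ∑ i, w i * x i ^ l = 0) {P : K[X]}
    (hP : P.natDegree < Fintype.card ι) : ∑ i, w i * P.eval (x i) = 0 := by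
  simp_rw [eval_eq_sum_range' hP, mul_sum, mul_left_comm (w _)]
  rw [sum_comm]
  exact sum_eq_zero fun l hl => by rw [← mul_sum, h l (mem_range.mp hl), mul_zero]

theorem sum_fiber_eq_zero_of_moments [DecidableEq K] {w x : ι → K}
    (h : ∀ l < Fintype.card ι, ∑ i, w i * x i ^ l = 0) (z : K) :
    ∑ i with x i = z, w i = 0 := by
  set s := univ.image x
  by_cases hz : z ∈ s
  · have hdeg : (Lagrange.basis s id z).natDegree < Fintype.card ι := by
      have : #s ≤ Fintype.card ι := card_image_le
      rw [Lagrange.natDegree_basis (Set.injOn_id _) hz]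
      have : 0 < #s := card_pos.mpr ⟨z, hz⟩
      omega
    have hself : (Lagrange.basis s id z).eval z = 1 :=
      Lagrange.eval_basis_self (Set.injOn_id _) hz
    have hne : ∀ y ∈ s, y ≠ z → (Lagrange.basis s id z).eval y = 0 := fun y hy hyz =>
      Lagrange.eval_basis_of_ne (v := id) hyz.symm hy
    rw [← sum_mul_eval_eq_zero_of_moments h hdeg, sum_filter]
    refine sum_congr rfl fun i _ => ?_
    split_ifs with hi
    · rw [hi, hself, mul_one]
    · rw [hne _ (mem_image_of_mem x (mem_univ i)) hi, mul_zero]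
  · exact sum_eq_zero fun i hi => absurd (mem_filter.mp hi).2 fun hxi =>
      hz (hxi ▸ mem_image_of_mem x (mem_univ i))

end Moments

theorem exists_perm_eq_comp_of_card_fiber_eq {α β : Type*} [Fintype α] [DecidableEq β]
    {f g : α → β} (h : ∀ z, #{j | f j = z} = #{j | g j = z}) :
    ∃ σ : Equiv.Perm α, ∀ j, f j = g (σ j) :=
  ⟨Equiv.ofFiberEquiv fun z => Fintype.equivOfCardEq (by simpa [Fintype.card_subtype] using h z),
    fun j => (Equiv.ofFiberEquiv_map _ j).symm⟩

section EvenOdd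

variable {n : ℕ}

theorem Fin.sum_univ_two_mul {M : Type*} [AddCommMonoid M] (F : Fin (2 * n) → M) :
    ∑ i, F i = ∑ j : Fin n, (F ⟨2 * j, by omega⟩ + F ⟨2 * j + 1, by omega⟩) := by
  rw [← (finProdFinEquiv.trans (finCongr (mul_comm n 2))).sum_comp, Fintype.sum_prod_type]
  refine sum_congr rfl fun j _ => ?_
  rw [Fin.sum_univ_two]
  congr 2 <;> ext <;> simp [finProdFinEquiv, add_comm]

theorem Fin.sum_univ_two_mul_neg_one_pow_mul {R : Type*} [CommRing R] (F : Fin (2 * n) → R) :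
    ∑ i : Fin (2 * n), (-1) ^ (i : ℕ) * F i =
      ∑ j : Fin n, (F ⟨2 * j, by omega⟩ - F ⟨2 * j + 1, by omega⟩) := by
  rw [Fin.sum_univ_two_mul]
  refine sum_congr rfl fun j _ => ?_
  simp [pow_succ, pow_mul, sub_eq_add_neg]

end EvenOdd

theorem stmt8 (n : ℕ) (ζ : Fin (2 * n) → ℂ)
    (h : ∀ l : ℕ, l < 2 * n → ∑ i : Fin (2 * n), (-1 : ℂ) ^ (i : ℕ) * ζ i ^ l = 0) :
    (∃ σ : Equiv.Perm (Fin n), ∀ i : Fin n,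
        ζ ⟨2 * (i : ℕ), by have := i.isLt; omega⟩ =
          ζ ⟨2 * ((σ i : Fin n) : ℕ) + 1, by have := (σ i).isLt; omega⟩) ∧
    ∀ k : ℤ, ∑ i : Fin (2 * n), (-1 : ℂ) ^ (i : ℕ) * ζ i ^ k = 0 := by
  classical
  set f : Fin n → ℂ := fun j => ζ ⟨2 * j, by omega⟩
  set g : Fin n → ℂ := fun j => ζ ⟨2 * j + 1, by omega⟩
  have hfiber : ∀ z, #{j | f j = z} = #{j | g j = z} := by
    intro z
    have hz : ∑ i : Fin (2 * n), (-1 : ℂ) ^ (i : ℕ) * (if ζ i = z then 1 else 0) = 0 := by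
      simp_rw [mul_boole, ← sum_filter]
      exact sum_fiber_eq_zero_of_moments (by simpa using h) z
    rw [Fin.sum_univ_two_mul_neg_one_pow_mul, sum_sub_distrib, sub_eq_zero, sum_boole,
      sum_boole] at hz
    exact_mod_cast hz
  obtain ⟨σ, hσ⟩ := exists_perm_eq_comp_of_card_fiber_eq hfiber
  refine ⟨⟨σ, hσ⟩, fun k => ?_⟩
  rw [Fin.sum_univ_two_mul_neg_one_pow_mul, sum_sub_distrib, sub_eq_zero]
  exact Fintype.sum_equiv σ _ _ fun j => congrArg (· ^ k) (hσ j)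
end

section
/- Let Ω = ⋃_{j=1}^n [a_j, a_j + r_j) be a disjoint union of n intervals with ∑ r_j = 1. If the zero set Z_Ω = {ξ : χ̂_Ω(ξ) = 0} ∪ {0} contains the arithmetic progression 0, d, 2d, ..., (2n−1)d for some d > 0, then dℤ ⊆ Z_Ω, d is a positive integer, and Ω d-tiles ℝ, i.e., ∑_{k∈ℤ} χ_Ω(x + k/d) = d for almost every x. -/
/-!
Write `e(t) = exp (2πit)`, `u_j = e(d a_j)` and `v_j = e(d (a_j + r_j))`. Since
`χ̂_Ω(ld) = ∑_j (v_j ^ l - u_j ^ l) / (2πild)`, the hypothesis says that the power sums of the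
`v_j` and of the `u_j` agree in all degrees `< 2n`, and a Vandermonde argument makes the two
families equal up to a permutation `σ`: `d (a_j + r_j) = d a_{σ j} + m_j` with `m_j ∈ ℤ`.
Then all power sums agree, so `dℤ ⊆ Z_Ω`; `d = ∑ d r_j = ∑ m_j` is an integer; and the number
`⌈(a_j + r_j - x) d⌉ - ⌈(a_j - x) d⌉` of `k` with `x + k/d ∈ [a_j, a_j + r_j)` sums over `j`
to `∑ m_j = d`, because the remaining ceilings cancel along `σ`.
-/

open MeasureTheory Complex Finset Real

theorem Multiset.eq_of_sum_map_pow_eq {K : Type*} [Field K] [CharZero K] {U V : Multiset K}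
    (h : ∀ l < card U + card V, (U.map (· ^ l)).sum = (V.map (· ^ l)).sum) : U = V := by
  classical
  let s := (U + V).toFinset
  have hs : #s ≤ card U + card V := (toFinset_card_le _).trans_eq (card_add U V)
  have hsum_count : ∀ W ≤ U + V, ∀ l : ℕ,
      (W.map (· ^ l)).sum = ∑ w ∈ s, (W.count w : K) * w ^ l := by
    intro W hW l
    rw [Finset.sum_multiset_map_count,
      Finset.sum_subset (s₂ := s) (toFinset_subset.mpr (subset_of_le hW))]
    · simp only [nsmul_eq_mul]
    · intro w _ hw
      simp [count_eq_zero_of_notMem (by simpa using hw)]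
  let e : Fin #s ≃ s := s.equivFin.symm
  have hc : (fun i => (U.count (e i : K) : K) - V.count (e i : K)) = 0 := by
    refine Matrix.eq_zero_of_forall_pow_sum_mul_pow_eq_zero (f := fun i => (e i : K))
      (Subtype.val_injective.comp e.injective) fun l => ?_
    have := h l (l.2.trans_le hs)
    rw [hsum_count U (Multiset.le_add_right _ _), hsum_count V (Multiset.le_add_left _ _),
      ← sub_eq_zero, ← Finset.sum_sub_distrib, ← Finset.sum_coe_sort] at this
    rw [← this, ← e.sum_comp]
    simp only [sub_mul]
  ext w
  by_cases hw : w ∈ s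
  · simpa [sub_eq_zero] using congrFun hc (e.symm ⟨w, hw⟩)
  · rw [Multiset.mem_toFinset, Multiset.mem_add, not_or] at hw
    rw [count_eq_zero_of_notMem hw.1, count_eq_zero_of_notMem hw.2]

theorem Equiv.Perm.exists_apply_eq_of_map_univ_eq {ι α : Type*} [Fintype ι] {f g : ι → α}
    (h : univ.val.map f = univ.val.map g) : ∃ σ : Perm ι, ∀ i, g (σ i) = f i := by
  classical
  have hfiber : ∀ c, Fintype.card {i // f i = c} = Fintype.card {i // g i = c} := fun c => by
    have := congrArg (Multiset.count c) h
    simp only [Multiset.count_map, eq_comm (a := c)] at this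
    rwa [Fintype.card_subtype, Fintype.card_subtype]
  exact ⟨ofFiberEquiv fun c => Fintype.equivOfCardEq (hfiber c), ofFiberEquiv_map _⟩

theorem Equiv.Perm.exists_apply_eq_of_sum_pow_eq {ι K : Type*} [Fintype ι] [Field K] [CharZero K]
    {f g : ι → K} (h : ∀ l < 2 * Fintype.card ι, ∑ i, f i ^ l = ∑ i, g i ^ l) :
    ∃ σ : Perm ι, ∀ i, g (σ i) = f i := by
  refine exists_apply_eq_of_map_univ_eq (Multiset.eq_of_sum_map_pow_eq fun l hl => ?_)
  simpa [Multiset.map_map, two_mul] using h l (by simpa [two_mul] using hl)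

theorem setIntegral_Ico_cexp_mul {a b : ℝ} (hab : a ≤ b) {c : ℂ} (hc : c ≠ 0) :
    ∫ x in Set.Ico a b, cexp (c * x) = (cexp (c * b) - cexp (c * a)) / c := by
  rw [integral_Ico_eq_integral_Ioo, ← integral_Ioc_eq_integral_Ioo,
    ← intervalIntegral.integral_of_le hab, integral_exp_mul_complex hc]

theorem setIntegral_iUnion_Ico_cexp_mul {ι : Type*} [Fintype ι] {a b : ι → ℝ}
    (hab : ∀ i, a i ≤ b i)
    (hdisj : Pairwise fun i j => Disjoint (Set.Ico (a i) (b i)) (Set.Ico (a j) (b j)))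
    {c : ℂ} (hc : c ≠ 0) :
    ∫ x in ⋃ i, Set.Ico (a i) (b i), cexp (c * x) =
      (∑ i, (cexp (c * b i) - cexp (c * a i))) / c := by
  have hint : IntegrableOn (fun x : ℝ => cexp (c * x)) (⋃ i, Set.Ico (a i) (b i)) :=
    integrableOn_finite_iUnion.mpr fun i =>
      (by fun_prop : Continuous fun x : ℝ => cexp (c * x)).integrableOn_Icc.mono_set
        Set.Ico_subset_Icc_self
  rw [integral_iUnion (fun _ => measurableSet_Ico) hdisj hint, tsum_fintype, Finset.sum_div]
  exact Finset.sum_congr rfl fun i _ => setIntegral_Ico_cexp_mul (hab i) hc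

theorem cexp_two_pi_I_mul_eq_cexp_iff {s t : ℝ} :
    cexp (2 * π * I * s) = cexp (2 * π * I * t) ↔ ∃ m : ℤ, s = t + m := by
  rw [Complex.exp_eq_exp_iff_exists_int]
  refine exists_congr fun m => ⟨fun h => ?_, fun h => by rw [h]; push_cast; ring⟩
  have h2piI : 2 * π * I ≠ 0 := by simp [Real.pi_ne_zero]
  exact_mod_cast mul_left_cancel₀ h2piI (by rw [h]; ring : 2 * π * I * s = 2 * π * I * (t + m))

theorem cexp_two_pi_I_intCast_mul_mul {k : ℤ} {d x : ℝ} :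
    cexp (2 * π * I * (k * d) * x) = cexp (2 * π * I * (d * x : ℝ)) ^ k := by
  rw [← Complex.exp_int_mul]
  push_cast
  congr 1
  ring

theorem hasSum_indicator_Ico_add_div {a b d : ℝ} (hab : a ≤ b) (hd : 0 < d) (x : ℝ) :
    HasSum (fun k : ℤ => (Set.Ico a b).indicator (fun _ => (1 : ℝ)) (x + k / d))
      ((⌈(b - x) * d⌉ - ⌈(a - x) * d⌉ : ℤ) : ℝ) := by
  have hmem : ∀ k : ℤ, x + k / d ∈ Set.Ico a b ↔ k ∈ Finset.Ico ⌈(a - x) * d⌉ ⌈(b - x) * d⌉ := by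
    intro k
    rw [Set.mem_Ico, Finset.mem_Ico, Int.ceil_le, Int.lt_ceil, ← sub_le_iff_le_add',
      ← lt_sub_iff_add_lt', le_div_iff₀ hd, div_lt_iff₀ hd]
  have hle : ⌈(a - x) * d⌉ ≤ ⌈(b - x) * d⌉ := Int.ceil_le_ceil (by nlinarith)
  have hsupp : ∀ k ∉ Finset.Ico ⌈(a - x) * d⌉ ⌈(b - x) * d⌉,
      (Set.Ico a b).indicator (fun _ => (1 : ℝ)) (x + k / d) = 0 :=
    fun k hk => Set.indicator_of_notMem (mt (hmem k).mp hk) _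
  have hcard : ∑ k ∈ Finset.Ico ⌈(a - x) * d⌉ ⌈(b - x) * d⌉,
      (Set.Ico a b).indicator (fun _ => (1 : ℝ)) (x + k / d) =
        ((⌈(b - x) * d⌉ - ⌈(a - x) * d⌉ : ℤ) : ℝ) := by
    rw [Finset.sum_congr rfl fun k hk => Set.indicator_of_mem ((hmem k).mpr hk) _, sum_const,
      Int.card_Ico, nsmul_one, ← Int.cast_natCast, Int.toNat_sub_of_le hle]
  exact hcard ▸ hasSum_sum_of_ne_finset_zero hsupp

theorem exists_perm_of_setIntegral_iUnion_Ico_cexp_eq_zero {ι : Type*} [Fintype ι] {a b : ι → ℝ}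
    (hab : ∀ i, a i ≤ b i)
    (hdisj : Pairwise fun i j => Disjoint (Set.Ico (a i) (b i)) (Set.Ico (a j) (b j)))
    {d : ℝ} (hd : d ≠ 0)
    (hzero : ∀ l : ℕ, 1 ≤ l → l ≤ 2 * Fintype.card ι - 1 →
      ∫ x in ⋃ i, Set.Ico (a i) (b i), cexp (2 * π * I * (l * d) * x) = 0) :
    ∃ σ : Equiv.Perm ι, ∃ m : ι → ℤ, ∀ i, d * b i = d * a (σ i) + m i := by
  have hpow : ∀ l < 2 * Fintype.card ι,
      ∑ i, cexp (2 * π * I * (d * b i : ℝ)) ^ l = ∑ i, cexp (2 * π * I * (d * a i : ℝ)) ^ l := by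
    intro l hl
    rcases Nat.eq_zero_or_pos l with rfl | hl0
    · simp
    have hc : 2 * π * I * (l * d) ≠ 0 := by simp [Real.pi_ne_zero, hd, hl0.ne']
    have := hzero l hl0 (by omega)
    rw [setIntegral_iUnion_Ico_cexp_mul hab hdisj hc, div_eq_zero_iff, or_iff_left hc,
      sum_sub_distrib, sub_eq_zero] at this
    have hexp : ∀ t : ℝ, cexp (2 * π * I * (l * d) * t) = cexp (2 * π * I * (d * t : ℝ)) ^ l := by
      simpa using fun t => cexp_two_pi_I_intCast_mul_mul (k := l) (d := d) (x := t)
    simpa only [hexp] using this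
  obtain ⟨σ, hσ⟩ := Equiv.Perm.exists_apply_eq_of_sum_pow_eq hpow
  choose m hm using fun i => cexp_two_pi_I_mul_eq_cexp_iff.mp (hσ i).symm
  exact ⟨σ, m, hm⟩

section PermutedEndpoints

variable {ι : Type*} [Fintype ι] {a b : ι → ℝ} {d : ℝ} {σ : Equiv.Perm ι} {m : ι → ℤ}

theorem setIntegral_iUnion_Ico_cexp_eq_zero_of_perm (hab : ∀ i, a i ≤ b i)
    (hdisj : Pairwise fun i j => Disjoint (Set.Ico (a i) (b i)) (Set.Ico (a j) (b j)))
    (hd : d ≠ 0) (hσ : ∀ i, d * b i = d * a (σ i) + m i) {k : ℤ} (hk : k ≠ 0) :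
    ∫ x in ⋃ i, Set.Ico (a i) (b i), cexp (2 * π * I * (k * d) * x) = 0 := by
  have hc : 2 * π * I * (k * d) ≠ 0 := by simp [Real.pi_ne_zero, hd, hk]
  have hbase : ∀ i, cexp (2 * π * I * (d * b i : ℝ)) = cexp (2 * π * I * (d * a (σ i) : ℝ)) :=
    fun i => cexp_two_pi_I_mul_eq_cexp_iff.mpr ⟨m i, hσ i⟩
  rw [setIntegral_iUnion_Ico_cexp_mul hab hdisj hc, sum_sub_distrib, div_eq_zero_iff, sub_eq_zero]
  left
  simp only [cexp_two_pi_I_intCast_mul_mul, hbase]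
  exact Equiv.sum_comp σ fun i => cexp (2 * π * I * (d * a i : ℝ)) ^ k

theorem sum_sub_mul_eq_sum_of_perm (hσ : ∀ i, d * b i = d * a (σ i) + m i) :
    ∑ i, (b i - a i) * d = ∑ i, (m i : ℝ) := by
  calc ∑ i, (b i - a i) * d = ∑ i, (d * a (σ i) + m i - d * a i) :=
        sum_congr rfl fun i _ => by rw [← hσ]; ring
    _ = ∑ i, (m i : ℝ) := by
        rw [sum_sub_distrib, sum_add_distrib, Equiv.sum_comp σ fun i => d * a i]
        ring

theorem tsum_indicator_iUnion_Ico_add_div_of_perm (hab : ∀ i, a i ≤ b i)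
    (hdisj : Pairwise fun i j => Disjoint (Set.Ico (a i) (b i)) (Set.Ico (a j) (b j)))
    (hd : 0 < d) (hσ : ∀ i, d * b i = d * a (σ i) + m i) (x : ℝ) :
    ∑' k : ℤ, (⋃ i, Set.Ico (a i) (b i)).indicator (fun _ => (1 : ℝ)) (x + k / d) =
      ∑ i, (m i : ℝ) := by
  have hind : (⋃ i, Set.Ico (a i) (b i)).indicator (fun _ => (1 : ℝ)) =
      fun y => ∑ i, (Set.Ico (a i) (b i)).indicator (fun _ => (1 : ℝ)) y := by
    simpa using Finset.indicator_biUnion univ (fun i => Set.Ico (a i) (b i))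
      fun i _ j _ hij => hdisj hij
  have hceil : ∀ i, ⌈(b i - x) * d⌉ = ⌈(a (σ i) - x) * d⌉ + m i := fun i => by
    rw [← Int.ceil_add_intCast]
    congr 1
    linear_combination hσ i
  rw [hind, (hasSum_sum fun i _ => hasSum_indicator_Ico_add_div (hab i) hd x).tsum_eq]
  simp only [hceil, Int.cast_sub, Int.cast_add]
  rw [sum_sub_distrib, sum_add_distrib, Equiv.sum_comp σ fun i => (⌈(a i - x) * d⌉ : ℝ)]
  ring

end PermutedEndpoints

theorem stmt9_general (n : ℕ) (a r : Fin n → ℝ)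
    (hr : ∀ j, 0 < r j) (hsum : ∑ j, r j = 1)
    (hdisj : Pairwise fun i j => Disjoint (Set.Ico (a i) (a i + r i)) (Set.Ico (a j) (a j + r j)))
    (Ω : Set ℝ) (hΩ : Ω = ⋃ j, Set.Ico (a j) (a j + r j))
    (d : ℝ) (hd : 0 < d)
    (hzero : ∀ l : ℕ, 1 ≤ l → l ≤ 2 * n - 1 →
      (∫ x in Ω, Complex.exp (2 * (Real.pi : ℂ) * Complex.I * ((l : ℂ) * (d : ℂ)) * (x : ℂ))) = 0) :
    (∀ k : ℤ, k ≠ 0 →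
      (∫ x in Ω, Complex.exp (2 * (Real.pi : ℂ) * Complex.I * ((k : ℂ) * (d : ℂ)) * (x : ℂ))) = 0) ∧
    (∃ m : ℕ, 0 < m ∧ d = m) ∧
    (∀ᵐ x : ℝ ∂volume, ∑' k : ℤ, Ω.indicator (fun _ => (1 : ℝ)) (x + k / d) = d) := by
  subst hΩ
  have hab : ∀ j, a j ≤ a j + r j := fun j => le_add_of_nonneg_right (hr j).le
  obtain ⟨σ, m, hσ⟩ := exists_perm_of_setIntegral_iUnion_Ico_cexp_eq_zero hab hdisj hd.ne'
    (by simpa using hzero)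
  have hdm : d = ((∑ j, m j : ℤ) : ℝ) := by
    rw [Int.cast_sum, ← sum_sub_mul_eq_sum_of_perm hσ]
    simp [← sum_mul, hsum]
  have hm_pos : (0 : ℤ) < ∑ j, m j := by exact_mod_cast hdm ▸ hd
  refine ⟨fun k hk => setIntegral_iUnion_Ico_cexp_eq_zero_of_perm hab hdisj hd.ne' hσ hk,
    ⟨(∑ j, m j).toNat, ?_, ?_⟩,
    ae_of_all _ fun x => (tsum_indicator_iUnion_Ico_add_div_of_perm hab hdisj hd hσ x).trans ?_⟩
  · omega
  · rw [hdm, ← Int.cast_natCast, Int.toNat_of_nonneg hm_pos.le]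
  · rw [hdm, Int.cast_sum]

theorem stmt9 (n : ℕ) (hn : 0 < n) (a r : Fin n → ℝ)
    (hr : ∀ j, 0 < r j) (hsum : ∑ j, r j = 1)
    (hdisj : Pairwise fun i j => Disjoint (Set.Ico (a i) (a i + r i)) (Set.Ico (a j) (a j + r j)))
    (Ω : Set ℝ) (hΩ : Ω = ⋃ j, Set.Ico (a j) (a j + r j))
    (d : ℝ) (hd : 0 < d)
    (hzero : ∀ l : ℕ, 1 ≤ l → l ≤ 2 * n - 1 →
      (∫ x in Ω, Complex.exp (2 * (Real.pi : ℂ) * Complex.I * ((l : ℂ) * (d : ℂ)) * (x : ℂ))) = 0) :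
    (∀ k : ℤ, k ≠ 0 →
      (∫ x in Ω, Complex.exp (2 * (Real.pi : ℂ) * Complex.I * ((k : ℂ) * (d : ℂ)) * (x : ℂ))) = 0) ∧
    (∃ m : ℕ, 0 < m ∧ d = m) ∧
    (∀ᵐ x : ℝ ∂volume, ∑' k : ℤ, Ω.indicator (fun _ => (1 : ℝ)) (x + k / d) = d) :=
  stmt9_general n a r hr hsum hdisj Ω hΩ d hd hzero
end

section
/- Let Ω₄ = [0,2] ∪ [M, M+1] ∪ [N, N+1] with M, N integers making the intervals disjoint. Then 2πiλ · χ̂_{Ω₄}(λ) = (e^{2πiλ} − 1)(1 + e^{2πiλ} + e^{2πiλM} + e^{2πiλN}), and the set Z¹ = {λ : 1 + e^{2πiλ} = 0 and e^{2πiλN} + e^{2πiλM} = 0} is nonempty if and only if M − N is odd, in which case Z¹ = ℤ + 1/2. -/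
/-!
Each interval `[a, b]` contributes `exp (c b) - exp (c a)` to `c · χ̂(λ)` with `c = 2πiλ`;
since all left endpoints are `0, M, N` and all lengths are `1` or `2`, the sum factors through
`exp c - 1`. For the zero set, `1 + e^{2πiλ} = 0` says `e^{2πiλ} = -1`, i.e. `λ ∈ ℤ + 1/2`,
and then `e^{2πiλM} = (-1)^M` for integer `M`, so the second equation becomes
`(-1)^N + (-1)^M = 0`, i.e. `M - N` odd.
-/

open MeasureTheory Complex Real

theorem mul_setIntegral_Icc_exp_mul (c : ℂ) {a b : ℝ} (hab : a ≤ b) :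
    c * ∫ x in Set.Icc a b, exp (c * x) = exp (c * b) - exp (c * a) := by
  rcases eq_or_ne c 0 with rfl | hc
  · simp
  rw [integral_Icc_eq_integral_Ioc, ← intervalIntegral.integral_of_le hab,
    integral_exp_mul_complex hc, mul_div_cancel₀ _ hc]

theorem mul_setIntegral_three_Icc_exp_mul (c : ℂ) {M N : ℝ}
    (hd1 : Disjoint (Set.Icc (0 : ℝ) 2) (Set.Icc M (M + 1)))
    (hd2 : Disjoint (Set.Icc (0 : ℝ) 2) (Set.Icc N (N + 1)))
    (hd3 : Disjoint (Set.Icc M (M + 1)) (Set.Icc N (N + 1))) :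
    c * ∫ x in Set.Icc (0 : ℝ) 2 ∪ Set.Icc M (M + 1) ∪ Set.Icc N (N + 1), exp (c * x) =
      (exp c - 1) * (1 + exp c + exp (c * M) + exp (c * N)) := by
  have hint : ∀ a b : ℝ, IntegrableOn (fun x : ℝ => exp (c * x)) (Set.Icc a b) := fun a b =>
    (continuous_exp.comp (continuous_const.mul continuous_ofReal)).integrableOn_Icc
  rw [setIntegral_union (Set.disjoint_union_left.mpr ⟨hd2, hd3⟩) measurableSet_Icc
      ((hint 0 2).union (hint M (M + 1))) (hint N (N + 1)),
    setIntegral_union hd1 measurableSet_Icc (hint 0 2) (hint M (M + 1)), mul_add, mul_add,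
    mul_setIntegral_Icc_exp_mul c zero_le_two, mul_setIntegral_Icc_exp_mul c (by linarith),
    mul_setIntegral_Icc_exp_mul c (by linarith)]
  push_cast
  simp only [mul_zero, Complex.exp_zero, mul_add, mul_one, Complex.exp_add,
    show c * 2 = c + c by ring]
  ring

theorem one_add_exp_two_pi_I_mul_eq_zero_iff (l : ℝ) :
    1 + exp (2 * π * I * l) = 0 ↔ ∃ k : ℤ, l = k + 1 / 2 := by
  rw [add_eq_zero_iff_eq_neg', ← exp_pi_mul_I, exp_eq_exp_iff_exists_int]
  refine exists_congr fun k => ?_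
  have hπI : (π : ℂ) * I ≠ 0 := mul_ne_zero (ofReal_ne_zero.mpr Real.pi_ne_zero) I_ne_zero
  constructor
  · intro h
    have h2 : ((2 * l : ℝ) : ℂ) = ((1 + 2 * k : ℝ) : ℂ) := by
      push_cast
      exact mul_left_cancel₀ hπI (by linear_combination h)
    linarith [ofReal_injective h2]
  · rintro rfl
    push_cast
    ring

theorem neg_one_zpow_add_neg_one_zpow_eq_zero_iff {K : Type*} [DivisionRing K] [NeZero (2 : K)]
    (M N : ℤ) : (-1 : K) ^ N + (-1 : K) ^ M = 0 ↔ Odd (M - N) := by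
  rw [neg_one_zpow_eq_ite, neg_one_zpow_eq_ite, Int.odd_sub]
  rcases Int.even_or_odd M with hM | hM <;> rcases Int.even_or_odd N with hN | hN <;>
    simp [hM, hN, Int.not_even_iff_odd.mpr, Int.not_odd_iff_even.mpr, one_add_one_eq_two,
      ← neg_add, two_ne_zero]

theorem one_add_exp_eq_zero_and_exp_add_exp_eq_zero_iff (M N : ℤ) (l : ℝ) :
    (1 + exp (2 * π * I * l) = 0 ∧
        exp (2 * π * I * l * ((N : ℝ) : ℂ)) + exp (2 * π * I * l * ((M : ℝ) : ℂ)) = 0) ↔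
      (∃ k : ℤ, l = k + 1 / 2) ∧ Odd (M - N) := by
  rw [← one_add_exp_two_pi_I_mul_eq_zero_iff,
    ← neg_one_zpow_add_neg_one_zpow_eq_zero_iff (K := ℂ)]
  simp only [ofReal_intCast, mul_comm _ ((_ : ℤ) : ℂ), exp_int_mul]
  exact and_congr_right fun h => by rw [← neg_eq_of_add_eq_zero_right h]

theorem stmt16 (M N : ℤ)
    (hd1 : Disjoint (Set.Icc (0 : ℝ) 2) (Set.Icc (M : ℝ) (M + 1)))
    (hd2 : Disjoint (Set.Icc (0 : ℝ) 2) (Set.Icc (N : ℝ) (N + 1)))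
    (hd3 : Disjoint (Set.Icc (M : ℝ) (M + 1)) (Set.Icc (N : ℝ) (N + 1))) :
    (∀ l : ℝ, (2 * (Real.pi : ℂ) * Complex.I * (l : ℂ)) *
        (∫ x in Set.Icc (0 : ℝ) 2 ∪ Set.Icc (M : ℝ) (M + 1) ∪ Set.Icc (N : ℝ) (N + 1),
          Complex.exp (2 * (Real.pi : ℂ) * Complex.I * (l : ℂ) * (x : ℂ))) =
      (Complex.exp (2 * (Real.pi : ℂ) * Complex.I * (l : ℂ)) - 1) *
        (1 + Complex.exp (2 * (Real.pi : ℂ) * Complex.I * (l : ℂ)) +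
          Complex.exp (2 * (Real.pi : ℂ) * Complex.I * (l : ℂ) * ((M : ℝ) : ℂ)) +
          Complex.exp (2 * (Real.pi : ℂ) * Complex.I * (l : ℂ) * ((N : ℝ) : ℂ)))) ∧
    ((∃ l : ℝ, 1 + Complex.exp (2 * (Real.pi : ℂ) * Complex.I * (l : ℂ)) = 0 ∧
        Complex.exp (2 * (Real.pi : ℂ) * Complex.I * (l : ℂ) * ((N : ℝ) : ℂ)) +
          Complex.exp (2 * (Real.pi : ℂ) * Complex.I * (l : ℂ) * ((M : ℝ) : ℂ)) = 0) ↔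
      Odd (M - N)) ∧
    (Odd (M - N) →
      {l : ℝ | 1 + Complex.exp (2 * (Real.pi : ℂ) * Complex.I * (l : ℂ)) = 0 ∧
          Complex.exp (2 * (Real.pi : ℂ) * Complex.I * (l : ℂ) * ((N : ℝ) : ℂ)) +
            Complex.exp (2 * (Real.pi : ℂ) * Complex.I * (l : ℂ) * ((M : ℝ) : ℂ)) = 0} =
        {l : ℝ | ∃ k : ℤ, l = k + 1 / 2}) := by
  simp_rw [one_add_exp_eq_zero_and_exp_add_exp_eq_zero_iff]
  refine ⟨fun l => mul_setIntegral_three_Icc_exp_mul _ hd1 hd2 hd3, ?_, fun hodd => ?_⟩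
  · exact ⟨fun ⟨_, _, hodd⟩ => hodd, fun hodd => ⟨1 / 2, ⟨0, by norm_num⟩, hodd⟩⟩
  · simp only [hodd, and_true]
end
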